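/- arXiv:1101.5799 — 10 statements merged into one kernel-verified Lean document; each statement's English description precedes it below -/
import Mathlib

section
/- Let f = (f_1,...,f_n): Ω ⊆ ℝ^n → ℝ^n be differentiable on an open set Ω with f(z) = 0 for some z ∈ Ω. Suppose the variable x_j can be eliminated from the equation f_i = 0 near z: there is a differentiable ψ: Ω^{(j)} → ℝ (where Ω^{(j)} is the projection of Ω deleting the j-th coordinate) such that x_j = ψ(x^{(j)}) whenever f_i(x) = 0. Define f̄: Ω^{(j)} → ℝ^{n-1} by substituting ψ for x_j in the remaining n-1 component functions f_k (k ≠ i). Then det J_f(z) = (-1)^{i+j} (∂f_i/∂x_j)(z) · det J_{f̄}(z^{(j)}), where J denotes the Jacobian matrix. -/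
/-!
Write `w = z^{(j)}` and `g y` for the point of the graph of `ψ` over `y`, so `g w = z` because
`f z = 0`. By the chain rule, `∂_l (f_k ∘ g)(w) = ∂_{j.succAbove l} f_k(z) + ∂_l ψ(w) ∂_j f_k(z)`;
for `k = i.succAbove _` these are the entries of `J_{f̄}(w)`, and for `k = i` the expression
vanishes. Indeed, every zero of `f_i` near `z` lies on the graph of `ψ`: if `f_i ∘ g` had a nonzero
derivative along `v`, then `f_i` would take opposite signs at `g (w ± t v)` for small `t > 0`, and
by the intermediate value theorem it would vanish on the tent `θ ↦ g (w + θ v) + (t - |θ|) e_j`,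
which meets the graph only at its ends. So adding `∂_l ψ(w)` times column `j` of `J_f(z)` to
column `j.succAbove l` leaves the determinant unchanged, clears row `i` off the pivot `(i, j)`, and
turns the complementary minor into `J_{f̄}(w)`; expanding along row `i` gives the formula.
-/

open Matrix Filter Topology Set

/-- The Jacobian matrix of `f : (Fin m → ℝ) → (Fin m → ℝ)` at `z`:
its `(k, l)` entry is `∂ f_k / ∂ x_l (z)`. -/
noncomputable def jacobianMatrix {m : ℕ} (f : (Fin m → ℝ) → (Fin m → ℝ))
    (z : Fin m → ℝ) : Matrix (Fin m) (Fin m) ℝ :=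
  Matrix.of fun k l => fderiv ℝ (fun x => f x k) z (Pi.single l 1)

theorem HasDerivAt.eventually_mul_neg {q : ℝ → ℝ} {a : ℝ} (hq : HasDerivAt q a 0)
    (hq0 : q 0 = 0) (ha : a ≠ 0) : ∀ᶠ t in 𝓝[>] 0, q t * q (-t) < 0 := by
  have hright : Tendsto (fun t => t⁻¹ * q t) (𝓝[>] 0) (𝓝 a) := by
    simpa [hq0] using hq.tendsto_slope_zero_right
  have hleft : Tendsto (fun t => (-t)⁻¹ * q (-t)) (𝓝[>] 0) (𝓝 a) := by
    have := hq.tendsto_slope_zero_left.comp (tendsto_neg_nhdsGT_neg (a := (0 : ℝ)))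
    simpa [hq0, Function.comp_def] using this
  filter_upwards [(hright.mul hleft).eventually (eventually_gt_nhds (mul_self_pos.2 ha)),
    self_mem_nhdsWithin] with t hslopes (ht : 0 < t)
  have hsplit : q t * q (-t) = -(t * t) * (t⁻¹ * q t * ((-t)⁻¹ * q (-t))) := by
    field_simp
  rw [hsplit]
  exact mul_neg_of_neg_of_pos (by nlinarith) hslopes

theorem hasDerivAt_eq_zero_of_zeros_subset_axis {φ : ℝ × ℝ → ℝ} {a : ℝ}
    (hcont : ∀ᶠ p in 𝓝 0, ContinuousAt φ p) (hzero : ∀ᶠ p in 𝓝 0, φ p = 0 → p.2 = 0)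
    (h0 : φ 0 = 0) (hφ : HasDerivAt (fun θ => φ (θ, 0)) a 0) : a = 0 := by
  by_contra ha
  obtain ⟨ρ, hρ, hball⟩ := Metric.eventually_nhds_iff_ball.1 (hcont.and hzero)
  obtain ⟨t, hsign, htρ, ht⟩ : ∃ t, φ (t, 0) * φ (-t, 0) < 0 ∧ t < ρ ∧ 0 < t :=
    ((hφ.eventually_mul_neg h0 ha).and <|
      ((eventually_lt_nhds hρ).filter_mono nhdsWithin_le_nhds).and self_mem_nhdsWithin).exists
  let γ : ℝ → ℝ × ℝ := fun θ => (θ, t - |θ|)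
  have hγ : ∀ θ ∈ uIcc (-t) t, γ θ ∈ Metric.ball 0 ρ := by
    intro θ hθ
    rw [uIcc_of_le (by linarith), mem_Icc, ← abs_le] at hθ
    simp only [γ, mem_ball_zero_iff, Prod.norm_def, Real.norm_eq_abs]
    exact max_lt (by linarith) (by rw [abs_lt]; constructor <;> linarith [abs_nonneg θ])
  have hγcont : ContinuousOn (fun θ => φ (γ θ)) (uIcc (-t) t) := fun θ hθ =>
    ((hball _ (hγ θ hθ)).1.comp (by fun_prop : ContinuousAt γ θ)).continuousWithinAt
  have hends : γ (-t) = (-t, 0) ∧ γ t = (t, 0) := by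
    simp [γ, abs_of_pos ht]
  have hsignchange : (0 : ℝ) ∈ uIcc (φ (γ (-t))) (φ (γ t)) := by
    rw [hends.1, hends.2, mem_uIcc]
    rcases mul_neg_iff.1 hsign with h | h
    · exact Or.inl ⟨h.2.le, h.1.le⟩
    · exact Or.inr ⟨h.1.le, h.2.le⟩
  obtain ⟨θ, hθ, hθzero⟩ := intermediate_value_uIcc hγcont hsignchange
  replace hθzero : φ (γ θ) = 0 := hθzero
  have hθend : |θ| = t := by
    have := (hball _ (hγ θ hθ)).2 hθzero
    simp only [γ] at this
    linarith
  rcases (abs_eq ht.le).1 hθend with rfl | rfl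
  · rw [hends.2] at hθzero; simp [hθzero] at hsign
  · rw [hends.1] at hθzero; simp [hθzero] at hsign

theorem Fin.image_comp_succAbove_mem_nhds {X : Type*} [TopologicalSpace X] {n : ℕ}
    (j : Fin (n + 1)) {Ω : Set (Fin (n + 1) → X)} {z : Fin (n + 1) → X} (hΩ : Ω ∈ 𝓝 z) :
    (fun x => x ∘ j.succAbove) '' Ω ∈ 𝓝 (z ∘ j.succAbove) := by
  have hlift : Tendsto (fun y => j.insertNth (α := fun _ => X) (z j) y)
      (𝓝 (z ∘ j.succAbove)) (𝓝 z) := by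
    have hz : j.insertNth (z j) (z ∘ j.succAbove) = z := Fin.insertNth_self_removeNth j z
    simpa only [hz] using
      (by fun_prop : Continuous fun y => j.insertNth (α := fun _ => X) (z j) y).tendsto
        (z ∘ j.succAbove)
  exact mem_of_superset (hlift hΩ) fun y hy => ⟨_, hy, Fin.insertNth_comp_succAbove j (z j) y⟩

theorem hasLineDerivAt_comp_graph_eq_zero {n : ℕ} {j : Fin (n + 1)}
    {φ : (Fin (n + 1) → ℝ) → ℝ} {ψ : (Fin n → ℝ) → ℝ} {z : Fin (n + 1) → ℝ} {v : Fin n → ℝ}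
    {d : ℝ} (hφ : ∀ᶠ x in 𝓝 z, ContinuousAt φ x)
    (hψ : ∀ᶠ y in 𝓝 (z ∘ j.succAbove), ContinuousAt ψ y)
    (hzero : ∀ᶠ x in 𝓝 z, φ x = 0 → x j = ψ (x ∘ j.succAbove)) (h0 : φ z = 0)
    (hd : HasLineDerivAt ℝ (fun y => φ (j.insertNth (ψ y) y)) d (z ∘ j.succAbove) v) :
    d = 0 := by
  set w := z ∘ j.succAbove
  have hgw : j.insertNth (ψ w) w = z := by
    rw [← hzero.self_of_nhds h0]
    exact Fin.insertNth_self_removeNth j z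
  let ℓ : ℝ × ℝ → Fin n → ℝ := fun p => w + p.1 • v
  -- `Φ (θ, s)` lies at height `s` above the graph of `ψ`, over the point `w + θ v`
  let Φ : ℝ × ℝ → Fin (n + 1) → ℝ := fun p => j.insertNth (ψ (ℓ p) + p.2) (ℓ p)
  have hℓ : Tendsto ℓ (𝓝 0) (𝓝 w) := by
    simpa [ℓ] using (by fun_prop : Continuous ℓ).tendsto 0
  have hΦ : ∀ᶠ p in 𝓝 0, ContinuousAt Φ p := (hℓ.eventually hψ).mono fun p hp =>
    ((hp.comp (by fun_prop)).add (by fun_prop)).finInsertNth j (by fun_prop)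
  have hΦ0 : Tendsto Φ (𝓝 0) (𝓝 z) := by
    simpa [Φ, ℓ, hgw] using hΦ.self_of_nhds.tendsto
  apply hasDerivAt_eq_zero_of_zeros_subset_axis (φ := φ ∘ Φ)
  · filter_upwards [hΦ, hΦ0.eventually hφ] with p hΦp hφp using hφp.comp hΦp
  · filter_upwards [hΦ0.eventually hzero] with p hp hp0
    simpa [Φ, Fin.insertNth_comp_succAbove] using hp hp0
  · simpa [Φ, ℓ, hgw] using h0
  · simp only [Function.comp_def, Φ, ℓ, add_zero]
    exact hd

theorem Fin.insertNth_pi_single {M : Type*} [AddZeroClass M] {n : ℕ} (j : Fin (n + 1)) (a : M)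
    (l : Fin n) (b : M) :
    j.insertNth (α := fun _ => M) a (Pi.single l b) =
      Pi.single (j.succAbove l) b + Pi.single j a := by
  ext m
  refine Fin.succAboveCases j ?_ (fun k => ?_) m <;> simp [Pi.single_apply]

section FinInsertNth

variable {𝕜 E F : Type*} [NontriviallyNormedField 𝕜] [NormedAddCommGroup E] [NormedSpace 𝕜 E]
  [NormedAddCommGroup F] [NormedSpace 𝕜 F] {n : ℕ}

theorem HasFDerivAt.finInsertNth (j : Fin (n + 1)) {a : E → F} {p : E → Fin n → F}
    {a' : E →L[𝕜] F} {p' : E →L[𝕜] Fin n → F} {x : E}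
    (ha : HasFDerivAt a a' x) (hp : HasFDerivAt p p' x) :
    HasFDerivAt (fun x => j.insertNth (α := fun _ => F) (a x) (p x))
      (ContinuousLinearMap.pi
        (j.insertNth (α := fun _ => E →L[𝕜] F) a' fun k => (ContinuousLinearMap.proj k).comp p'))
      x := by
  refine hasFDerivAt_pi.2 fun m => Fin.succAboveCases j ?_ (fun k => ?_) m
  · simpa using ha
  · simpa using hasFDerivAt_pi'.1 hp k

@[simp]
theorem ContinuousLinearMap.pi_finInsertNth_apply (j : Fin (n + 1)) (a' : E →L[𝕜] F)
    (p' : E →L[𝕜] Fin n → F) (v : E) :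
    ContinuousLinearMap.pi
        (j.insertNth (α := fun _ => E →L[𝕜] F) a' fun k => (ContinuousLinearMap.proj k).comp p') v =
      j.insertNth (α := fun _ => F) (a' v) (p' v) := by
  ext m
  refine Fin.succAboveCases j ?_ (fun k => ?_) m <;> simp

end FinInsertNth

section Graph

variable {𝕜 : Type*} [NontriviallyNormedField 𝕜] {n : ℕ} {j : Fin (n + 1)}
  {φ : (Fin (n + 1) → 𝕜) → 𝕜} {ψ : (Fin n → 𝕜) → 𝕜} {w : Fin n → 𝕜}

theorem hasFDerivAt_comp_graph (hφ : DifferentiableAt 𝕜 φ (j.insertNth (ψ w) w))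
    (hψ : DifferentiableAt 𝕜 ψ w) :
    HasFDerivAt (fun y => φ (j.insertNth (ψ y) y))
      ((fderiv 𝕜 φ (j.insertNth (ψ w) w)).comp <|
        ContinuousLinearMap.pi (j.insertNth (α := fun _ => (Fin n → 𝕜) →L[𝕜] 𝕜) (fderiv 𝕜 ψ w)
          fun k => (ContinuousLinearMap.proj k).comp (ContinuousLinearMap.id 𝕜 _))) w :=
  HasFDerivAt.comp (f := fun y => j.insertNth (α := fun _ => 𝕜) (ψ y) y) w hφ.hasFDerivAt
    (hψ.hasFDerivAt.finInsertNth j (hasFDerivAt_id w))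

theorem fderiv_comp_graph_apply_single (hφ : DifferentiableAt 𝕜 φ (j.insertNth (ψ w) w))
    (hψ : DifferentiableAt 𝕜 ψ w) (l : Fin n) :
    fderiv 𝕜 (fun y => φ (j.insertNth (ψ y) y)) w (Pi.single l 1) =
      fderiv 𝕜 φ (j.insertNth (ψ w) w) (Pi.single (j.succAbove l) 1) +
        fderiv 𝕜 ψ w (Pi.single l 1) * fderiv 𝕜 φ (j.insertNth (ψ w) w) (Pi.single j 1) := by
  rw [(hasFDerivAt_comp_graph hφ hψ).fderiv, ContinuousLinearMap.comp_apply,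
    ContinuousLinearMap.pi_finInsertNth_apply, ContinuousLinearMap.id_apply,
    Fin.insertNth_pi_single, map_add, ← smul_eq_mul, ← map_smul, ← Pi.single_smul, smul_eq_mul,
    mul_one]

end Graph

theorem Matrix.det_succ_of_row_eq_neg_mul_pivot {R : Type*} [CommRing R] {n : ℕ}
    (A : Matrix (Fin (n + 1)) (Fin (n + 1)) R) (i j : Fin (n + 1)) (p : Fin n → R)
    (hrow : ∀ l, A i (j.succAbove l) + p l * A i j = 0) :
    A.det = (-1) ^ ((i : ℕ) + (j : ℕ)) * A i j *
      (Matrix.of fun k l => A (i.succAbove k) (j.succAbove l) + p l * A (i.succAbove k) j).det := by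
  let c : Fin (n + 1) → R := j.insertNth 0 p
  let B : Matrix (Fin (n + 1)) (Fin (n + 1)) R := Matrix.of fun k m => A k m + c m * A k j
  have hB : B.det = A.det := by
    rw [← det_transpose B, ← det_transpose A]
    exact det_eq_of_forall_row_eq_smul_add_const c j (by simp [c]) fun m k => rfl
  have hBrow : ∀ m ≠ j, B i m = 0 := by
    intro m hm
    obtain ⟨l, rfl⟩ := Fin.exists_succAbove_eq hm
    simpa [B, c] using hrow l
  rw [← hB, det_succ_row B i, Finset.sum_eq_single j
    (fun m _ hm => by rw [hBrow m hm, mul_zero, zero_mul]) (by simp)]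
  congr 2
  · simp [B, c]
  · ext k l
    simp [B, c]

/-- Elimination of the variable `x_j` from the equation `f_i = 0` relates the
determinant of the Jacobian of `f` to that of the reduced system `f̄`. -/
theorem det_jacobian_elimination {n : ℕ}
    (Ω : Set (Fin (n + 1) → ℝ)) (hΩ : IsOpen Ω)
    (f : (Fin (n + 1) → ℝ) → (Fin (n + 1) → ℝ))
    (hf : DifferentiableOn ℝ f Ω)
    (z : Fin (n + 1) → ℝ) (hz : z ∈ Ω) (hfz : f z = 0)
    (i j : Fin (n + 1)) (ψ : (Fin n → ℝ) → ℝ)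
    (hψdiff : DifferentiableOn ℝ ψ ((fun x => x ∘ j.succAbove) '' Ω))
    (hψ : ∀ x ∈ Ω, f x i = 0 → x j = ψ (x ∘ j.succAbove)) :
    (jacobianMatrix f z).det =
      (-1 : ℝ) ^ ((i : ℕ) + (j : ℕ)) *
        fderiv ℝ (fun x => f x i) z (Pi.single j 1) *
        (jacobianMatrix
            (fun y k => f (j.insertNth (ψ y) y) (i.succAbove k))
            (z ∘ j.succAbove)).det := by
  set w := z ∘ j.succAbove
  have hgw : j.insertNth (ψ w) w = z := by
    rw [← hψ z hz (by simp [hfz])]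
    exact Fin.insertNth_self_removeNth j z
  have hfnear : ∀ᶠ x in 𝓝 z, ∀ k, DifferentiableAt ℝ (fun x => f x k) x :=
    (hΩ.eventually_mem hz).mono fun x hx =>
      differentiableAt_pi.1 (hf.differentiableAt (hΩ.mem_nhds hx))
  have hψnear : ∀ᶠ y in 𝓝 w, DifferentiableAt ℝ ψ y :=
    (eventually_mem_nhds_iff.2 (Fin.image_comp_succAbove_mem_nhds j (hΩ.mem_nhds hz))).mono
      fun y hy => hψdiff.differentiableAt hy
  have hfg : ∀ k, DifferentiableAt ℝ (fun x => f x k) (j.insertNth (ψ w) w) :=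
    hgw ▸ hfnear.self_of_nhds
  set p : Fin n → ℝ := fun l => fderiv ℝ ψ w (Pi.single l 1)
  have hentry : ∀ k l, fderiv ℝ (fun y => f (j.insertNth (ψ y) y) k) w (Pi.single l 1) =
      jacobianMatrix f z k (j.succAbove l) + p l * jacobianMatrix f z k j := fun k l => by
    rw [fderiv_comp_graph_apply_single (hfg k) hψnear.self_of_nhds, hgw]
    rfl
  have hkey : ∀ l, jacobianMatrix f z i (j.succAbove l) + p l * jacobianMatrix f z i j = 0 :=
    fun l => hentry i l ▸ hasLineDerivAt_comp_graph_eq_zero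
      (hfnear.mono fun x hx => (hx i).continuousAt) (hψnear.mono fun y hy => hy.continuousAt)
      ((hΩ.eventually_mem hz).mono hψ) (congrFun hfz i)
      ((hasFDerivAt_comp_graph (hfg i) hψnear.self_of_nhds).differentiableAt.hasFDerivAt
        |>.hasLineDerivAt _)
  rw [Matrix.det_succ_of_row_eq_neg_mul_pivot _ i j p hkey]
  congr 2
  ext k l
  rw [of_apply, ← hentry]
  rfl
end

section
/- Let η₂, δ₁, μ₁, μ₂, Ē, F̄₁ > 0 and define f(Y₁) = η₂(Ē − μ₁Y₁)Y₁ / (μ₂(δ₁(F̄₁ − Y₁) + η₂Y₁)) on Γ₁ = [0, ξ₁) with ξ₁ = min(F̄₁, Ē/μ₁). Let Λ = (1 + η₂/δ₁)μ₁F̄₁ − Ē. If Λ ≤ 0, then ξ₁ = F̄₁ and f is strictly increasing on [0, F̄₁). -/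
open Set

/-!
Clearing the (positive) denominators, `f y - f x` has the sign of `(y - x) K(x, y)` with
`K(x, y) = δ₁F̄₁Ē - μ₁(δ₁F̄₁(x + y) + (η₂ - δ₁)xy)`. On `[0, F̄₁)²` this bracket splits as
`-δ₁F̄₁Λ + μ₁δ₁(F̄₁ - x)(F̄₁ - y) + μ₁η₂(F̄₁² - xy)`: the first and last terms are nonnegative
when `Λ ≤ 0`, the middle one is positive.
-/

theorem StrictMonoOn.div_of_mul_lt_mul {α β : Type*} [Preorder α] [Field β] [LinearOrder β]
    [IsStrictOrderedRing β] {S : Set α} {N D : α → β} (hD : ∀ x ∈ S, 0 < D x)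
    (h : ∀ x ∈ S, ∀ y ∈ S, x < y → N x * D y < N y * D x) :
    StrictMonoOn (fun x => N x / D x) S := fun x hx y hy hxy =>
  (div_lt_div_iff₀ (hD x hx) (hD y hy)).2 (h x hx y hy hxy)

section Motif

variable {η δ μ E F x y : ℝ}

theorem motif_lambda_nonpos_iff (hδ : 0 < δ) :
    (1 + η / δ) * μ * F - E ≤ 0 ↔ μ * F * (δ + η) ≤ δ * E := by
  rw [sub_nonpos, ← mul_le_mul_iff_right₀ hδ,
    show δ * ((1 + η / δ) * μ * F) = μ * F * (δ + η) by field_simp]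

theorem motif_denominator_pos (hη : 0 < η) (hδ : 0 < δ) (hx : x ∈ Ico 0 F) :
    0 < δ * (F - x) + η * x := by
  obtain ⟨hx0, hxF⟩ := hx
  have : 0 < δ * (F - x) := mul_pos hδ (sub_pos.2 hxF)
  nlinarith

theorem motif_bracket_pos (hη : 0 < η) (hδ : 0 < δ) (hμ : 0 < μ)
    (hΛ : μ * F * (δ + η) ≤ δ * E) (hx : x ∈ Ico 0 F) (hy : y ∈ Ico 0 F) :
    0 < δ * F * E - δ * F * μ * (x + y) - (η - δ) * μ * (x * y) := by
  obtain ⟨hx0, hxF⟩ := hx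
  obtain ⟨hy0, hyF⟩ := hy
  have hF : 0 ≤ F := hx0.trans hxF.le
  have hxy : x * y ≤ F * F := mul_le_mul hxF.le hyF.le hy0 hF
  have hsplit : δ * F * E - δ * F * μ * (x + y) - (η - δ) * μ * (x * y) =
      F * (δ * E - μ * F * (δ + η)) + μ * δ * ((F - x) * (F - y)) + μ * η * (F * F - x * y) := by
    ring
  rw [hsplit]
  have h₁ : 0 ≤ F * (δ * E - μ * F * (δ + η)) := mul_nonneg hF (sub_nonneg.2 hΛ)
  have h₂ : 0 < μ * δ * ((F - x) * (F - y)) :=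
    mul_pos (mul_pos hμ hδ) (mul_pos (sub_pos.2 hxF) (sub_pos.2 hyF))
  have h₃ : 0 ≤ μ * η * (F * F - x * y) := mul_nonneg (mul_pos hμ hη).le (sub_nonneg.2 hxy)
  linarith

end Motif

theorem motif_f_increasing_general (η₂ δ₁ μ₁ μ₂ Ebar F₁ : ℝ)
    (hη₂ : 0 < η₂) (hδ₁ : 0 < δ₁) (hμ₁ : 0 < μ₁) (hμ₂ : 0 < μ₂)
    (hF₁ : 0 < F₁)
    (hΛ : (1 + η₂ / δ₁) * μ₁ * F₁ - Ebar ≤ 0) :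
    let f : ℝ → ℝ := fun Y₁ =>
      η₂ * (Ebar - μ₁ * Y₁) * Y₁ / (μ₂ * (δ₁ * (F₁ - Y₁) + η₂ * Y₁))
    min F₁ (Ebar / μ₁) = F₁ ∧ StrictMonoOn f (Ico 0 F₁) := by
  intro f
  have hΛ' := (motif_lambda_nonpos_iff hδ₁).1 hΛ
  have hF₁E : μ₁ * F₁ ≤ Ebar :=
    le_of_mul_le_mul_left (by nlinarith [mul_pos (mul_pos hμ₁ hF₁) hη₂]) hδ₁
  refine ⟨min_eq_left ((le_div_iff₀ hμ₁).2 (by linarith)), ?_⟩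
  refine StrictMonoOn.div_of_mul_lt_mul
    (fun x hx => mul_pos hμ₂ (motif_denominator_pos hη₂ hδ₁ hx)) fun x hx y hy hxy => ?_
  have hcross : η₂ * (Ebar - μ₁ * y) * y * (μ₂ * (δ₁ * (F₁ - x) + η₂ * x)) -
      η₂ * (Ebar - μ₁ * x) * x * (μ₂ * (δ₁ * (F₁ - y) + η₂ * y)) =
      η₂ * μ₂ * (y - x) *
        (δ₁ * F₁ * Ebar - δ₁ * F₁ * μ₁ * (x + y) - (η₂ - δ₁) * μ₁ * (x * y)) := by
    ring
  have := mul_pos (mul_pos (mul_pos hη₂ hμ₂) (sub_pos.2 hxy))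
    (motif_bracket_pos hη₂ hδ₁ hμ₁ hΛ' hx hy)
  linarith

/-- Motif (f) (shared kinase, two phosphatases): if
`Λ = (1 + η₂/δ₁)μ₁F̄₁ − Ē ≤ 0` then `ξ₁ = min(F̄₁, Ē/μ₁) = F̄₁` and the
steady-state relation `f` is strictly increasing on `[0, F̄₁)`. -/
theorem motif_f_increasing (η₂ δ₁ μ₁ μ₂ Ebar F₁ : ℝ)
    (hη₂ : 0 < η₂) (hδ₁ : 0 < δ₁) (hμ₁ : 0 < μ₁) (hμ₂ : 0 < μ₂)
    (hE : 0 < Ebar) (hF₁ : 0 < F₁)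
    (hΛ : (1 + η₂ / δ₁) * μ₁ * F₁ - Ebar ≤ 0) :
    let f : ℝ → ℝ := fun Y₁ =>
      η₂ * (Ebar - μ₁ * Y₁) * Y₁ / (μ₂ * (δ₁ * (F₁ - Y₁) + η₂ * Y₁))
    min F₁ (Ebar / μ₁) = F₁ ∧ StrictMonoOn f (Ico 0 F₁) :=
  motif_f_increasing_general η₂ δ₁ μ₁ μ₂ Ebar F₁ hη₂ hδ₁ hμ₁ hμ₂ hF₁ hΛ
end

section
/- Let η₂, δ₁, μ₁, μ₂, Ē, F̄₁ > 0 and f(Y₁) = η₂(Ē − μ₁Y₁)Y₁ / (μ₂(δ₁(F̄₁ − Y₁) + η₂Y₁)) on Γ₁ = [0, ξ₁), ξ₁ = min(F̄₁, Ē/μ₁). If Λ = (1 + η₂/δ₁)μ₁F̄₁ − Ē > 0, then there exists a unique α ∈ (0, ξ₁) with f'(α) = 0, and f is strictly increasing on [0, α) and strictly decreasing on (α, ξ₁). -/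
/-!
Up to the positive factor `η₂ / (μ₂ D(Y₁)²)`, where `D(Y₁) = δ₁(F̄₁ − Y₁) + η₂Y₁`, the derivative of
`f` is the quadratic `q(Y₁) = (δ₁ − η₂)μ₁Y₁² − 2δ₁μ₁F̄₁Y₁ + δ₁ĒF̄₁`. It has `q(0) > 0`, and `q(ξ₁) < 0`:
at `ξ₁ = F̄₁` this is `q(F̄₁) = −F̄₁δ₁Λ`, and at `ξ₁ = Ē/μ₁ ≤ F̄₁` it is
`q(Ē/μ₁) = (Ē/μ₁)((δ₁ − η₂)Ē − δ₁μ₁F̄₁)`.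
Since the linear coefficient of `q` is negative, `q` cannot return to nonnegative values after
becoming nonpositive on `[0, ξ₁]`: for `δ₁ ≤ η₂` it is decreasing on `[0, ∞)`, and otherwise it is
convex. So `q` changes sign exactly once on `(0, ξ₁)`, and so does `f'`.
-/

open Set

lemma ContinuousOn.exists_single_sign_change {φ : ℝ → ℝ} {a b : ℝ} (hab : a ≤ b)
    (hφ : ContinuousOn φ (Icc a b)) (ha : 0 < φ a) (hb : φ b < 0)
    (hneg : ∀ y₁ ∈ Ico a b, ∀ y₂ ∈ Ioo y₁ b, φ y₁ ≤ 0 → φ y₂ < 0) :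
    ∃ α ∈ Ioo a b, φ α = 0 ∧ (∀ y ∈ Ico a α, 0 < φ y) ∧ ∀ y ∈ Ioo α b, φ y < 0 := by
  obtain ⟨α, hα, hφα⟩ := intermediate_value_Ioo' hab hφ ⟨hb, ha⟩
  refine ⟨α, hα, hφα, fun y hy => ?_, fun y hy => hneg α (Ioo_subset_Ico_self hα) y hy hφα.le⟩
  by_contra! hφy
  exact (hneg y ⟨hy.1, hy.2.trans hα.2⟩ α ⟨hy.2, hα.2⟩ hφy).ne hφα

lemma quadratic_neg_of_nonpos_of_lt {a b c y₁ y₂ ξ : ℝ} (hb : b < 0) (hy₁ : 0 ≤ y₁)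
    (h₁₂ : y₁ < y₂) (h₂ξ : y₂ < ξ) (hq₁ : a * y₁ ^ 2 + b * y₁ + c ≤ 0)
    (hqξ : a * ξ ^ 2 + b * ξ + c < 0) :
    a * y₂ ^ 2 + b * y₂ + c < 0 := by
  rcases le_or_gt 0 a with ha | ha
  · -- convexity: compare with the chord from `y₁` to `ξ`
    have hchord : (ξ - y₁) * (a * y₂ ^ 2 + b * y₂ + c) = (ξ - y₂) * (a * y₁ ^ 2 + b * y₁ + c)
        + (y₂ - y₁) * (a * ξ ^ 2 + b * ξ + c) - a * (y₂ - y₁) * (ξ - y₂) * (ξ - y₁) := by ring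
    have h₁ := sub_pos.2 h₁₂
    have h₂ := sub_pos.2 h₂ξ
    have hξ₁ := sub_pos.2 (h₁₂.trans h₂ξ)
    have hgap : 0 ≤ a * (y₂ - y₁) * (ξ - y₂) * (ξ - y₁) := by positivity
    have : (ξ - y₁) * (a * y₂ ^ 2 + b * y₂ + c) < 0 := by
      rw [hchord]
      linarith [mul_nonpos_of_nonneg_of_nonpos h₂.le hq₁, mul_neg_of_pos_of_neg h₁ hqξ]
    exact neg_of_mul_neg_right this hξ₁.le
  · have hslope : b + a * (y₁ + y₂) < 0 := by
      linarith [mul_nonpos_of_nonpos_of_nonneg ha.le (by linarith : 0 ≤ y₁ + y₂)]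
    have hdiff : (a * y₂ ^ 2 + b * y₂ + c) - (a * y₁ ^ 2 + b * y₁ + c)
        = (y₂ - y₁) * (b + a * (y₁ + y₂)) := by ring
    linarith [mul_neg_of_pos_of_neg (sub_pos.2 h₁₂) hslope]

lemma quadratic_exists_single_sign_change {a b c ξ : ℝ} (hξ : 0 < ξ) (hb : b < 0) (hc : 0 < c)
    (hqξ : a * ξ ^ 2 + b * ξ + c < 0) :
    ∃ α ∈ Ioo 0 ξ, a * α ^ 2 + b * α + c = 0 ∧ (∀ y ∈ Ico 0 α, 0 < a * y ^ 2 + b * y + c) ∧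
      ∀ y ∈ Ioo α ξ, a * y ^ 2 + b * y + c < 0 :=
  ContinuousOn.exists_single_sign_change (φ := fun y => a * y ^ 2 + b * y + c) hξ.le
    (by fun_prop) (by simpa using hc) hqξ
    fun _ hy₁ _ hy₂ hq₁ => quadratic_neg_of_nonpos_of_lt hb hy₁.1 hy₂.1 hy₂.2 hq₁ hqξ

lemma unimodal_of_hasDerivAt_mul {f k q : ℝ → ℝ} {a b α : ℝ}
    (hf : ∀ y ∈ Ico a b, HasDerivAt f (k y * q y) y) (hk : ∀ y ∈ Ico a b, 0 < k y)
    (hα : α ∈ Ioo a b) (hqα : q α = 0) (hpos : ∀ y ∈ Ico a α, 0 < q y)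
    (hneg : ∀ y ∈ Ioo α b, q y < 0) :
    deriv f α = 0 ∧ (∀ β ∈ Ioo a b, deriv f β = 0 → β = α) ∧
      StrictMonoOn f (Ico a α) ∧ StrictAntiOn f (Ioo α b) := by
  have hIcoα : Ico a α ⊆ Ico a b := Ico_subset_Ico_right hα.2.le
  have hIooα : Ioo α b ⊆ Ico a b := fun y hy => ⟨hα.1.trans hy.1 |>.le, hy.2⟩
  have hderiv : ∀ y ∈ Ico a b, deriv f y = k y * q y := fun y hy => (hf y hy).deriv
  have hcont : ContinuousOn f (Ico a b) := fun y hy => (hf y hy).continuousAt.continuousWithinAt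
  refine ⟨by rw [hderiv α (Ioo_subset_Ico_self hα), hqα, mul_zero], fun β hβ hβ0 => ?_, ?_, ?_⟩
  · have hqβ : q β = 0 := by
      rw [hderiv β (Ioo_subset_Ico_self hβ)] at hβ0
      exact (mul_eq_zero.1 hβ0).resolve_left (hk β (Ioo_subset_Ico_self hβ)).ne'
    rcases lt_trichotomy β α with h | h | h
    · exact absurd hqβ (hpos β ⟨hβ.1.le, h⟩).ne'
    · exact h
    · exact absurd hqβ (hneg β ⟨h, hβ.2⟩).ne
  · refine strictMonoOn_of_deriv_pos (convex_Ico a α) (hcont.mono hIcoα) fun y hy => ?_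
    rw [interior_Ico] at hy
    rw [hderiv y (hIcoα (Ioo_subset_Ico_self hy))]
    exact mul_pos (hk y (hIcoα (Ioo_subset_Ico_self hy))) (hpos y (Ioo_subset_Ico_self hy))
  · refine strictAntiOn_of_deriv_neg (convex_Ioo α b) (hcont.mono hIooα) fun y hy => ?_
    rw [interior_Ioo] at hy
    rw [hderiv y (hIooα hy)]
    exact mul_neg_of_pos_of_neg (hk y (hIooα hy)) (hneg y hy)

lemma hasDerivAt_motif_f {η₂ δ₁ μ₁ μ₂ Ebar F₁ y : ℝ} (hμ₂ : μ₂ ≠ 0)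
    (hD : δ₁ * (F₁ - y) + η₂ * y ≠ 0) :
    HasDerivAt (fun Y => η₂ * (Ebar - μ₁ * Y) * Y / (μ₂ * (δ₁ * (F₁ - Y) + η₂ * Y)))
      (η₂ / (μ₂ * (δ₁ * (F₁ - y) + η₂ * y) ^ 2) *
        ((δ₁ - η₂) * μ₁ * y ^ 2 + -(2 * δ₁ * μ₁ * F₁) * y + δ₁ * Ebar * F₁)) y := by
  have hN : HasDerivAt (fun Y => η₂ * (Ebar - μ₁ * Y) * Y) (η₂ * (Ebar - 2 * μ₁ * y)) y :=
    ((((hasDerivAt_id' y).const_mul μ₁).const_sub Ebar).const_mul η₂).fun_mul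
      (hasDerivAt_id' y) |>.congr_deriv (by ring)
  have hD' : HasDerivAt (fun Y => μ₂ * (δ₁ * (F₁ - Y) + η₂ * Y)) (μ₂ * (η₂ - δ₁)) y :=
    ((((hasDerivAt_id' y).const_sub F₁).const_mul δ₁).fun_add
      ((hasDerivAt_id' y).const_mul η₂)).const_mul μ₂ |>.congr_deriv (by ring)
  refine hN.fun_div hD' (mul_ne_zero hμ₂ hD) |>.congr_deriv ?_
  field_simp
  ring

lemma motif_numerator_neg_at_min {η₂ δ₁ μ₁ Ebar F₁ : ℝ} (hη₂ : 0 < η₂) (hδ₁ : 0 < δ₁)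
    (hμ₁ : 0 < μ₁) (hE : 0 < Ebar) (hF₁ : 0 < F₁)
    (hΛ : 0 < (1 + η₂ / δ₁) * μ₁ * F₁ - Ebar) :
    let ξ := min F₁ (Ebar / μ₁)
    (δ₁ - η₂) * μ₁ * ξ ^ 2 + -(2 * δ₁ * μ₁ * F₁) * ξ + δ₁ * Ebar * F₁ < 0 := by
  intro ξ
  rcases le_total F₁ (Ebar / μ₁) with h | h
  · have key : (δ₁ - η₂) * μ₁ * F₁ ^ 2 + -(2 * δ₁ * μ₁ * F₁) * F₁ + δ₁ * Ebar * F₁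
        = -(F₁ * (δ₁ * ((1 + η₂ / δ₁) * μ₁ * F₁ - Ebar))) := by
      field_simp; ring
    rw [show ξ = F₁ from min_eq_left h, key, neg_neg_iff_pos]
    exact mul_pos hF₁ (mul_pos hδ₁ hΛ)
  · have hEF : Ebar ≤ μ₁ * F₁ := by rwa [div_le_iff₀' hμ₁] at h
    have key : (δ₁ - η₂) * μ₁ * (Ebar / μ₁) ^ 2 + -(2 * δ₁ * μ₁ * F₁) * (Ebar / μ₁)
        + δ₁ * Ebar * F₁ = Ebar / μ₁ * ((δ₁ - η₂) * Ebar - δ₁ * (μ₁ * F₁)) := by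
      field_simp; ring
    rw [show ξ = Ebar / μ₁ from min_eq_right h, key]
    refine mul_neg_of_pos_of_neg (div_pos hE hμ₁) ?_
    nlinarith [mul_le_mul_of_nonneg_left hEF hδ₁.le, mul_pos hη₂ hE]

/-- Motif (f): if `Λ = (1 + η₂/δ₁)μ₁F̄₁ − Ē > 0` then `f` has a unique
critical point `α ∈ (0, ξ₁)`, and `f` is strictly increasing on `[0, α)` and
strictly decreasing on `(α, ξ₁)`. -/
theorem motif_f_unimodal (η₂ δ₁ μ₁ μ₂ Ebar F₁ : ℝ)
    (hη₂ : 0 < η₂) (hδ₁ : 0 < δ₁) (hμ₁ : 0 < μ₁) (hμ₂ : 0 < μ₂)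
    (hE : 0 < Ebar) (hF₁ : 0 < F₁)
    (hΛ : 0 < (1 + η₂ / δ₁) * μ₁ * F₁ - Ebar) :
    let ξ₁ : ℝ := min F₁ (Ebar / μ₁)
    let f : ℝ → ℝ := fun Y₁ =>
      η₂ * (Ebar - μ₁ * Y₁) * Y₁ / (μ₂ * (δ₁ * (F₁ - Y₁) + η₂ * Y₁))
    ∃ α, α ∈ Ioo 0 ξ₁ ∧ deriv f α = 0 ∧
      (∀ β ∈ Ioo (0 : ℝ) ξ₁, deriv f β = 0 → β = α) ∧
      StrictMonoOn f (Ico 0 α) ∧ StrictAntiOn f (Ioo α ξ₁) := by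
  intro ξ₁ f
  have hD : ∀ y ∈ Ico 0 ξ₁, 0 < δ₁ * (F₁ - y) + η₂ * y := fun y hy => by
    have hyF : y < F₁ := hy.2.trans_le (min_le_left _ _)
    linarith [mul_pos hδ₁ (sub_pos.2 hyF), mul_nonneg hη₂.le hy.1]
  obtain ⟨α, hα, hqα, hpos, hneg⟩ := quadratic_exists_single_sign_change
    (lt_min hF₁ (div_pos hE hμ₁)) (by have := mul_pos (mul_pos hδ₁ hμ₁) hF₁; linarith)
    (by positivity) (motif_numerator_neg_at_min hη₂ hδ₁ hμ₁ hE hF₁ hΛ)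
  exact ⟨α, hα, unimodal_of_hasDerivAt_mul
    (fun y hy => hasDerivAt_motif_f hμ₂.ne' (hD y hy).ne')
    (fun y hy => div_pos hη₂ (mul_pos hμ₂ (pow_pos (hD y hy) 2))) hα hqα hpos hneg⟩
end

section
/- In the setting of Motif (f) with Λ = (1 + η₂/δ₁)μ₁F̄₁ − Ē > 0, let α ∈ (0, ξ₁) be the unique critical point of f. If Ē − μ₁F̄₁ − μ₂F̄₂ ≥ 0 (with F̄₂ > 0), then there exists α₁ ≤ α with f(α₁) = F̄₂, and the set Γ = {Y₁ ∈ [0, ξ₁) : f(Y₁) < F̄₂} equals [0, α₁). If instead Ē − μ₁F̄₁ − μ₂F̄₂ < 0 and F̄₂ ≤ f(α), then Γ = [0, α₁) ∪ (α₂, ξ₁) for some α₁ ≤ α ≤ α₂ with f(α₁) = f(α₂) = F̄₂; and if F̄₂ > f(α), then Γ = [0, ξ₁). -/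
/-!
`f` is continuous on `[0, ξ₁]`, increasing up to `α` and decreasing after it, so each branch
crosses the level `F̄₂` at most once (intermediate value theorem) and `Γ` is cut out by these
crossings. Whether the decreasing branch crosses is decided by its end value `f ξ₁`: when
`Ē - μ₁F̄₁ - μ₂F̄₂ ≥ 0` we have `ξ₁ = F̄₁` and `f F̄₁ = (Ē - μ₁F̄₁)/μ₂ ≥ F̄₂`, and otherwise
`f ξ₁ < F̄₂` (either `ξ₁ = F̄₁` by the same formula, or `ξ₁ = Ē/μ₁` where `f` vanishes).
-/

open Set

section Unimodal

variable {α β : Type*} [LinearOrder α] [LinearOrder β] {f : α → β} {a b c : α} {t : β}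

theorem AntitoneOn.apply_right_le_of_continuousWithinAt [TopologicalSpace α] [OrderTopology α]
    [DenselyOrdered α] [TopologicalSpace β] [OrderClosedTopology β]
    (hf : AntitoneOn f (Ico c b)) (hb : ContinuousWithinAt f (Ico c b) b) {y : α}
    (hy : y ∈ Ico c b) : f b ≤ f y := by
  have hsub : Ioo y b ⊆ Ico c b := fun z hz => ⟨hy.1.trans hz.1.le, hz.2⟩
  refine ContinuousWithinAt.closure_le (s := Ioo y b) ?_ (hb.mono hsub)
    continuousWithinAt_const fun z hz => hf hy (hsub hz) hz.1.le
  rw [closure_Ioo hy.2.ne]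
  exact right_mem_Icc.2 hy.2.le

theorem sep_lt_eq_Ico_union_Ioo {x₁ x₂ : α} (hx₁ : x₁ ∈ Icc a c) (hx₂ : x₂ ∈ Icc c b)
    (hleft : ∀ y ∈ Icc a c, f y < t ↔ y < x₁) (hright : ∀ y ∈ Ico c b, f y < t ↔ x₂ < y) :
    {y | y ∈ Ico a b ∧ f y < t} = Ico a x₁ ∪ Ioo x₂ b := by
  ext y
  simp only [mem_ofPred_eq, mem_union, mem_Ico, mem_Ioo]
  rcases le_or_gt y c with hyc | hcy
  · have hx₂y : ¬ x₂ < y := not_lt.2 (hyc.trans hx₂.1)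
    constructor
    · rintro ⟨⟨hay, -⟩, hft⟩
      exact .inl ⟨hay, (hleft y ⟨hay, hyc⟩).1 hft⟩
    · rintro (⟨hay, hyx₁⟩ | ⟨hx₂y', -⟩)
      · exact ⟨⟨hay, hyx₁.trans_le (hx₁.2.trans (hx₂.1.trans hx₂.2))⟩, (hleft y ⟨hay, hyc⟩).2 hyx₁⟩
      · exact absurd hx₂y' hx₂y
  · have hyx₁ : ¬ y < x₁ := not_lt.2 (hx₁.2.trans hcy.le)
    constructor
    · rintro ⟨⟨-, hyb⟩, hft⟩
      exact .inr ⟨(hright y ⟨hcy.le, hyb⟩).1 hft, hyb⟩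
    · rintro (⟨-, hyx₁'⟩ | ⟨hx₂y, hyb⟩)
      · exact absurd hyx₁' hyx₁
      · exact ⟨⟨hx₁.1.trans (hx₁.2.trans hcy.le), hyb⟩, (hright y ⟨hcy.le, hyb⟩).2 hx₂y⟩

theorem sep_lt_eq_Ico_of_apply_lt (hmono : MonotoneOn f (Icc a c)) (hanti : AntitoneOn f (Ico c b))
    (hfc : f c < t) : {y | y ∈ Ico a b ∧ f y < t} = Ico a b := by
  refine sep_eq_self_iff_mem_true.2 fun y hy => ?_
  rcases le_or_gt y c with hyc | hcy
  · exact (hmono ⟨hy.1, hyc⟩ ⟨hy.1.trans hyc, le_rfl⟩ hyc).trans_lt hfc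
  · exact (hanti ⟨le_rfl, hcy.trans hy.2⟩ ⟨hcy.le, hy.2⟩ hcy.le).trans_lt hfc

end Unimodal

section UnimodalContinuous

variable {α β : Type*} [ConditionallyCompleteLinearOrder α] [TopologicalSpace α] [OrderTopology α]
  [DenselyOrdered α] [LinearOrder β] [TopologicalSpace β] [OrderClosedTopology β]
  {f : α → β} {a b c : α} {t : β}

theorem exists_eq_and_sep_lt_eq_Ico (hf : ContinuousOn f (Icc a b))
    (hmono : StrictMonoOn f (Icc a c)) (hanti : StrictAntiOn f (Ico c b)) (hc : c ∈ Ico a b)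
    (hfa : f a ≤ t) (hfb : t ≤ f b) :
    ∃ x₁, x₁ ≤ c ∧ f x₁ = t ∧ {y | y ∈ Ico a b ∧ f y < t} = Ico a x₁ := by
  have hcb : Ico c b ⊆ Icc a b := Ico_subset_Icc_self.trans (Icc_subset_Icc_left hc.1)
  have hge : ∀ y ∈ Ico c b, t ≤ f y := fun y hy =>
    hfb.trans <| hanti.antitoneOn.apply_right_le_of_continuousWithinAt
      ((hf b (right_mem_Icc.2 (hc.1.trans hc.2.le))).mono hcb) hy
  obtain ⟨x₁, hx₁, hfx₁⟩ := intermediate_value_Icc hc.1 (hf.mono (Icc_subset_Icc_right hc.2.le))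
    ⟨hfa, hge c ⟨le_rfl, hc.2⟩⟩
  refine ⟨x₁, hx₁.2, hfx₁, ?_⟩
  refine (sep_lt_eq_Ico_union_Ioo hx₁ ⟨hc.2.le, le_rfl⟩ (fun y hy => hfx₁ ▸ hmono.lt_iff_lt hy hx₁)
    (fun y hy => iff_of_false (hge y hy).not_gt hy.2.not_gt)).trans ?_
  rw [Ioo_self, union_empty]

theorem exists_eq_and_sep_lt_eq_Ico_union_Ioo (hf : ContinuousOn f (Icc a b))
    (hmono : StrictMonoOn f (Icc a c)) (hanti : StrictAntiOn f (Ico c b)) (hc : c ∈ Icc a b)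
    (hfa : f a ≤ t) (hfb : f b < t) (hfc : t ≤ f c) :
    ∃ x₁ x₂, x₁ ≤ c ∧ c ≤ x₂ ∧ f x₁ = t ∧ f x₂ = t ∧
      {y | y ∈ Ico a b ∧ f y < t} = Ico a x₁ ∪ Ioo x₂ b := by
  obtain ⟨x₁, hx₁, hfx₁⟩ := intermediate_value_Icc hc.1 (hf.mono (Icc_subset_Icc_right hc.2))
    ⟨hfa, hfc⟩
  obtain ⟨x₂, hx₂, hfx₂⟩ := intermediate_value_Icc' hc.2 (hf.mono (Icc_subset_Icc_left hc.1))
    ⟨hfb.le, hfc⟩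
  have hx₂b : x₂ < b := hx₂.2.lt_of_ne (by rintro rfl; exact hfb.ne hfx₂)
  exact ⟨x₁, x₂, hx₁.2, hx₂.1, hfx₁, hfx₂, sep_lt_eq_Ico_union_Ioo hx₁ hx₂
    (fun y hy => hfx₁ ▸ hmono.lt_iff_lt hy hx₁)
    (fun y hy => hfx₂ ▸ hanti.lt_iff_gt hy ⟨hx₂.1, hx₂b⟩)⟩

end UnimodalContinuous

section Motif

variable {η₂ δ₁ μ₁ μ₂ Ebar F₁ : ℝ}

noncomputable def motifF (η₂ δ₁ μ₁ μ₂ Ebar F₁ : ℝ) (y : ℝ) : ℝ :=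
  η₂ * (Ebar - μ₁ * y) * y / (μ₂ * (δ₁ * (F₁ - y) + η₂ * y))

theorem motifF_zero : motifF η₂ δ₁ μ₁ μ₂ Ebar F₁ 0 = 0 := by
  simp [motifF]

theorem motifF_self (hη₂ : η₂ ≠ 0) (hF₁ : F₁ ≠ 0) :
    motifF η₂ δ₁ μ₁ μ₂ Ebar F₁ F₁ = (Ebar - μ₁ * F₁) / μ₂ := by
  simp only [motifF, sub_self, mul_zero, zero_add]
  field_simp

theorem motifF_div (hμ₁ : μ₁ ≠ 0) : motifF η₂ δ₁ μ₁ μ₂ Ebar F₁ (Ebar / μ₁) = 0 := by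
  simp [motifF, mul_div_cancel₀ _ hμ₁]

theorem continuousOn_motifF (hη₂ : 0 < η₂) (hδ₁ : 0 < δ₁) (hμ₂ : μ₂ ≠ 0) (hF₁ : 0 < F₁) :
    ContinuousOn (motifF η₂ δ₁ μ₁ μ₂ Ebar F₁) (Icc 0 F₁) := by
  refine ContinuousOn.div (by fun_prop) (by fun_prop) fun y hy => mul_ne_zero hμ₂ (ne_of_gt ?_)
  -- the denominator is affine in `y`, equal to `δ₁ F₁ > 0` at `0` and to `η₂ F₁ > 0` at `F₁`
  nlinarith [mul_nonneg hδ₁.le (sub_nonneg.2 hy.2), mul_nonneg hη₂.le hy.1, mul_pos hδ₁ hF₁]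

end Motif

theorem motif_f_Gamma_general (η₂ δ₁ μ₁ μ₂ Ebar F₁ F₂ : ℝ)
    (hη₂ : 0 < η₂) (hδ₁ : 0 < δ₁) (hμ₁ : 0 < μ₁) (hμ₂ : 0 < μ₂)
    (hF₁ : 0 < F₁) (hF₂ : 0 < F₂)
    (ξ₁ : ℝ) (hξ₁ : ξ₁ = min F₁ (Ebar / μ₁))
    (f : ℝ → ℝ)
    (hf : ∀ Y₁, f Y₁ =
      η₂ * (Ebar - μ₁ * Y₁) * Y₁ / (μ₂ * (δ₁ * (F₁ - Y₁) + η₂ * Y₁)))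
    (α : ℝ) (hα : α ∈ Ioo 0 ξ₁)
    (hmono : StrictMonoOn f (Icc 0 α)) (hanti : StrictAntiOn f (Ico α ξ₁)) :
    let Γ : Set ℝ := {Y₁ | Y₁ ∈ Ico 0 ξ₁ ∧ f Y₁ < F₂}
    (0 ≤ Ebar - μ₁ * F₁ - μ₂ * F₂ →
      ∃ α₁, α₁ ≤ α ∧ f α₁ = F₂ ∧ Γ = Ico 0 α₁) ∧
    (Ebar - μ₁ * F₁ - μ₂ * F₂ < 0 → F₂ ≤ f α →
      ∃ α₁ α₂, α₁ ≤ α ∧ α ≤ α₂ ∧ f α₁ = F₂ ∧ f α₂ = F₂ ∧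
        Γ = Ico 0 α₁ ∪ Ioo α₂ ξ₁) ∧
    (f α < F₂ → Γ = Ico 0 ξ₁) := by
  intro Γ
  obtain rfl : f = motifF η₂ δ₁ μ₁ μ₂ Ebar F₁ := funext hf
  have hcont : ContinuousOn (motifF η₂ δ₁ μ₁ μ₂ Ebar F₁) (Icc 0 ξ₁) :=
    (continuousOn_motifF hη₂ hδ₁ hμ₂.ne' hF₁).mono (Icc_subset_Icc_right (hξ₁ ▸ min_le_left _ _))
  have hf₀ : motifF η₂ δ₁ μ₁ μ₂ Ebar F₁ 0 ≤ F₂ := motifF_zero.trans_le hF₂.le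
  refine ⟨fun h => ?_, fun h hfα => ?_,
    sep_lt_eq_Ico_of_apply_lt hmono.monotoneOn hanti.antitoneOn⟩
  · have hξF : ξ₁ = F₁ := hξ₁.trans (min_eq_left ((le_div_iff₀ hμ₁).2 (by linarith [mul_pos hμ₂ hF₂])))
    refine exists_eq_and_sep_lt_eq_Ico hcont hmono hanti (Ioo_subset_Ico_self hα) hf₀ ?_
    rw [hξF, motifF_self hη₂.ne' hF₁.ne', le_div_iff₀ hμ₂]
    linarith
  · refine exists_eq_and_sep_lt_eq_Ico_union_Ioo hcont hmono hanti (Ioo_subset_Icc_self hα) hf₀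
      ?_ hfα
    rcases min_choice F₁ (Ebar / μ₁) with hm | hm <;> rw [hξ₁, hm]
    · rw [motifF_self hη₂.ne' hF₁.ne', div_lt_iff₀ hμ₂]
      linarith
    · rwa [motifF_div hμ₁.ne']

/-- Motif (f), case `Λ > 0`: description of the admissible set
`Γ = {Y₁ ∈ [0, ξ₁) : f(Y₁) < F̄₂}` according to the position of `F̄₂`. -/
theorem motif_f_Gamma (η₂ δ₁ μ₁ μ₂ Ebar F₁ F₂ : ℝ)
    (hη₂ : 0 < η₂) (hδ₁ : 0 < δ₁) (hμ₁ : 0 < μ₁) (hμ₂ : 0 < μ₂)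
    (hE : 0 < Ebar) (hF₁ : 0 < F₁) (hF₂ : 0 < F₂)
    (hΛ : 0 < (1 + η₂ / δ₁) * μ₁ * F₁ - Ebar)
    (ξ₁ : ℝ) (hξ₁ : ξ₁ = min F₁ (Ebar / μ₁))
    (f : ℝ → ℝ)
    (hf : ∀ Y₁, f Y₁ =
      η₂ * (Ebar - μ₁ * Y₁) * Y₁ / (μ₂ * (δ₁ * (F₁ - Y₁) + η₂ * Y₁)))
    (α : ℝ) (hα : α ∈ Ioo 0 ξ₁)
    (hmono : StrictMonoOn f (Icc 0 α)) (hanti : StrictAntiOn f (Ico α ξ₁)) :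
    let Γ : Set ℝ := {Y₁ | Y₁ ∈ Ico 0 ξ₁ ∧ f Y₁ < F₂}
    (0 ≤ Ebar - μ₁ * F₁ - μ₂ * F₂ →
      ∃ α₁, α₁ ≤ α ∧ f α₁ = F₂ ∧ Γ = Ico 0 α₁) ∧
    (Ebar - μ₁ * F₁ - μ₂ * F₂ < 0 → F₂ ≤ f α →
      ∃ α₁ α₂, α₁ ≤ α ∧ α ≤ α₂ ∧ f α₁ = F₂ ∧ f α₂ = F₂ ∧
        Γ = Ico 0 α₁ ∪ Ioo α₂ ξ₁) ∧
    (f α < F₂ → Γ = Ico 0 ξ₁) :=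
  motif_f_Gamma_general η₂ δ₁ μ₁ μ₂ Ebar F₁ F₂ hη₂ hδ₁ hμ₁ hμ₂ hF₁ hF₂ ξ₁ hξ₁ f hf α hα hmono hanti
end

section
/- In the two-site phosphorylation cycle with one shared kinase E and one shared phosphatase F (Motif (g)), if the total amounts satisfy μ₁F̄ ≤ Ē ≤ μ₂F̄, then the steady-state map S̄ = φ(S₁) = S₀(S₁) + S₁ + S₂(S₁) + X₁(S₁) + X₂(S₁) + Y₁(S₁) + Y₂(S₁) is strictly increasing on [0, +∞), where Y₁(s) = δ₁ s p₂(s)/p₃(s), Y₂(s) = η₂ s p₁(s)/p₃(s), S₀(s) = μ₁δ₁ s p₂(s)/(μ₂η₁ p₁(s)), S₂(s) = η₂ s p₁(s)/(δ₂ p₂(s)), X_k = μ_k Y_k, with p₁(s) = Ē + δ₁(Ē − μ₁F̄)s, p₂(s) = μ₂F̄ + η₂(μ₂F̄ − Ē)s, p₃(s) = μ₂ + μ₂(δ₁+η₂)s + δ₁η₂(μ₂−μ₁)s². Consequently there is a unique biologically meaningful steady state for each total amount S̄ ≥ 0. -/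
/-!
Write `φ(s) = s + g(s)` with `g = S₀ + S₂ + (1 + μ₁) Y₁ + (1 + μ₂) Y₂`. When
`μ₁F̄ ≤ Ē ≤ μ₂F̄` every coefficient of `p₁` and `p₂` is nonnegative, and each of
`S₀`, `S₂` and `(1 + μ₁) Y₁ + (1 + μ₂) Y₂ = s (c₀ + c₁ s) / p₃(s)` has the shape
`s (c + d s) / (A + B s + C s²)`. Such a function is nondecreasing on `[0, ∞)` as soon as
`c C ≤ d B`, because for `a ≤ b` the cross-multiplied difference is
`(b - a) (c A + d A (a + b) + (d B - c C) a b)`. So `φ` is the identity plus a continuous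
nondecreasing function vanishing at `0`, hence a strictly increasing bijection of `[0, ∞)`
by the intermediate value theorem.
-/

open Set

section AffineQuadraticRatio

variable {A B C c d : ℝ}

theorem monotoneOn_mul_affine_div_quadratic (hA : 0 < A) (hB : 0 ≤ B) (hC : 0 ≤ C)
    (hc : 0 ≤ c) (hd : 0 ≤ d) (hcd : c * C ≤ d * B) :
    MonotoneOn (fun s => s * (c + d * s) / (A + B * s + C * s ^ 2)) (Ici 0) := by
  intro a (ha : 0 ≤ a) b (hb : 0 ≤ b) hab
  have hdiff : b * (c + d * b) * (A + B * a + C * a ^ 2)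
        - a * (c + d * a) * (A + B * b + C * b ^ 2)
      = (b - a) * (c * A + d * A * (a + b) + (d * B - c * C) * (a * b)) := by ring
  have hba : 0 ≤ b - a := sub_nonneg.2 hab
  have hkey : 0 ≤ d * B - c * C := sub_nonneg.2 hcd
  rw [div_le_div_iff₀ (by positivity) (by positivity), ← sub_nonneg, hdiff]
  positivity

theorem continuousOn_mul_affine_div_quadratic (hA : 0 < A) (hB : 0 ≤ B) (hC : 0 ≤ C) :
    ContinuousOn (fun s => s * (c + d * s) / (A + B * s + C * s ^ 2)) (Ici 0) :=
  ContinuousOn.div (by fun_prop) (by fun_prop) fun s (hs : 0 ≤ s) => by positivity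

variable {k K : ℝ}

theorem eqOn_mul_affine_div_affine (hK : K ≠ 0) (hA : 0 < A) (hB : 0 ≤ B) :
    EqOn (fun s => s * (k * c + k * d * s) / (K * A + K * B * s + 0 * s ^ 2))
      (fun s => k * s * (c + d * s) / (K * (A + B * s))) (Ici 0) := by
  intro s (hs : 0 ≤ s)
  have : A + B * s ≠ 0 := by positivity
  field_simp
  ring

theorem monotoneOn_mul_affine_div_affine (hk : 0 ≤ k) (hK : 0 < K) (hA : 0 < A)
    (hB : 0 ≤ B) (hc : 0 ≤ c) (hd : 0 ≤ d) :
    MonotoneOn (fun s => k * s * (c + d * s) / (K * (A + B * s))) (Ici 0) :=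
  (monotoneOn_mul_affine_div_quadratic (by positivity) (by positivity) le_rfl (by positivity)
    (by positivity) (by rw [mul_zero]; positivity)).congr
    (eqOn_mul_affine_div_affine hK.ne' hA hB)

theorem continuousOn_mul_affine_div_affine (hK : 0 < K) (hA : 0 < A) (hB : 0 ≤ B) :
    ContinuousOn (fun s => k * s * (c + d * s) / (K * (A + B * s))) (Ici 0) :=
  (continuousOn_mul_affine_div_quadratic (by positivity) (by positivity) le_rfl).congr
    (eqOn_mul_affine_div_affine hK.ne' hA hB).symm

end AffineQuadraticRatio

theorem existsUnique_add_eq_of_monotoneOn {g : ℝ → ℝ} (hgc : ContinuousOn g (Ici 0))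
    (hg : MonotoneOn g (Ici 0)) (hg0 : g 0 = 0) {S : ℝ} (hS : 0 ≤ S) :
    ∃! s, s ∈ Ici 0 ∧ s + g s = S := by
  have hgS : 0 ≤ g S := hg0 ▸ hg self_mem_Ici hS hS
  have hmem : S ∈ Icc (id 0 + g 0) (id S + g S) :=
    ⟨by simpa [hg0] using hS, by simpa using hgS⟩
  obtain ⟨s, hs, hsS⟩ :=
    intermediate_value_Icc hS ((continuousOn_id.add hgc).mono Icc_subset_Ici_self) hmem
  refine ⟨s, ⟨hs.1, hsS⟩, fun t ht => ?_⟩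
  exact (strictMonoOn_id.add_monotone hg).injOn ht.1 hs.1 (ht.2.trans hsS.symm)

/-- Motif (g) (shared kinase and shared phosphatase): if
`μ₁F̄ ≤ Ē ≤ μ₂F̄` then the steady-state map `φ(S₁)` is strictly increasing on
`[0, ∞)`, and for each total amount `S̄ ≥ 0` there is a unique biologically
meaningful steady state. -/
theorem motif_g_monostationary (η₁ η₂ δ₁ δ₂ μ₁ μ₂ Ebar Fbar : ℝ)
    (hη₁ : 0 < η₁) (hη₂ : 0 < η₂) (hδ₁ : 0 < δ₁) (hδ₂ : 0 < δ₂)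
    (hμ₁ : 0 < μ₁) (hμ₂ : 0 < μ₂) (hE : 0 < Ebar) (hF : 0 < Fbar)
    (h₁ : μ₁ * Fbar ≤ Ebar) (h₂ : Ebar ≤ μ₂ * Fbar) :
    let p₁ : ℝ → ℝ := fun s => Ebar + δ₁ * (Ebar - μ₁ * Fbar) * s
    let p₂ : ℝ → ℝ := fun s => μ₂ * Fbar + η₂ * (μ₂ * Fbar - Ebar) * s
    let p₃ : ℝ → ℝ := fun s =>
      μ₂ + μ₂ * (δ₁ + η₂) * s + δ₁ * η₂ * (μ₂ - μ₁) * s ^ 2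
    let Y₁ : ℝ → ℝ := fun s => δ₁ * s * p₂ s / p₃ s
    let Y₂ : ℝ → ℝ := fun s => η₂ * s * p₁ s / p₃ s
    let S₀ : ℝ → ℝ := fun s => μ₁ * δ₁ * s * p₂ s / (μ₂ * η₁ * p₁ s)
    let S₂ : ℝ → ℝ := fun s => η₂ * s * p₁ s / (δ₂ * p₂ s)
    let φ : ℝ → ℝ := fun s =>
      S₀ s + s + S₂ s + μ₁ * Y₁ s + μ₂ * Y₂ s + Y₁ s + Y₂ s
    StrictMonoOn φ (Ici 0) ∧
      ∀ S : ℝ, 0 ≤ S → ∃! s, s ∈ Ici (0 : ℝ) ∧ φ s = S := by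
  intro p₁ p₂ p₃ Y₁ Y₂ S₀ S₂ φ
  have hα : 0 ≤ Ebar - μ₁ * Fbar := sub_nonneg.2 h₁
  have hβ : 0 ≤ μ₂ * Fbar - Ebar := sub_nonneg.2 h₂
  have hμ : 0 ≤ μ₂ - μ₁ := sub_nonneg.2 (le_of_mul_le_mul_right (h₁.trans h₂) hF)
  let c₀ := (1 + μ₁) * δ₁ * (μ₂ * Fbar) + (1 + μ₂) * η₂ * Ebar
  let c₁ := δ₁ * η₂ * (μ₂ - μ₁) * (Ebar + Fbar)
  let g : ℝ → ℝ := fun s => S₀ s + S₂ s + s * (c₀ + c₁ * s) / p₃ s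
  have hφ : φ = fun s => s + g s :=
    funext fun s => by simp only [φ, g, Y₁, Y₂, p₁, p₂, c₀, c₁]; ring
  have hc : c₀ * (δ₁ * η₂ * (μ₂ - μ₁)) ≤ c₁ * (μ₂ * (δ₁ + η₂)) := by
    have hfac : c₁ * (μ₂ * (δ₁ + η₂)) - c₀ * (δ₁ * η₂ * (μ₂ - μ₁)) = δ₁ * η₂ * (μ₂ - μ₁) *
        (δ₁ * μ₂ * (Ebar - μ₁ * Fbar) + η₂ * (μ₂ * Fbar - Ebar)) := by ring
    rw [← sub_nonneg, hfac]
    positivity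
  have hg : MonotoneOn g (Ici 0) :=
    ((monotoneOn_mul_affine_div_affine (by positivity) (by positivity) hE (by positivity)
        (by positivity) (by positivity)).add
      (monotoneOn_mul_affine_div_affine hη₂.le hδ₂ (by positivity) (by positivity) hE.le
        (by positivity))).add
      (monotoneOn_mul_affine_div_quadratic hμ₂ (by positivity) (by positivity) (by positivity)
        (by positivity) hc)
  have hgc : ContinuousOn g (Ici 0) :=
    ((continuousOn_mul_affine_div_affine (by positivity) hE (by positivity)).add
      (continuousOn_mul_affine_div_affine hδ₂ (by positivity) (by positivity))).add
      (continuousOn_mul_affine_div_quadratic hμ₂ (by positivity) (by positivity))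
  have hg0 : g 0 = 0 := by simp [g, S₀, S₂]
  rw [hφ]
  exact ⟨strictMonoOn_id.add_monotone hg,
    fun S hS => existsUnique_add_eq_of_monotoneOn hgc hg hg0 hS⟩
end

section
/- Let ψ = (φ₁, φ₂): Γ̄ → ℝ², where Γ̄ = {(Y₁,Y₂) ∈ ℝ²_{≥0} : Y₁+Y₂ < F̄, μ₁Y₁+μ₂Y₂ < Ē}, φ₁(Y₁,Y₂) = μ₁Y₁/(η₁(Ē−μ₁Y₁−μ₂Y₂)) + Y₁/(δ₁(F̄−Y₁−Y₂)) + (1+μ₁)Y₁, and φ₂(Y₁,Y₂) = μ₂Y₂/(η₂(Ē−μ₁Y₁−μ₂Y₂)) + Y₂/(δ₂(F̄−Y₁−Y₂)) + (1+μ₂)Y₂. If σ = (μ₁−μ₂)(μ₁δ₁η₂ − μ₂δ₂η₁) ≥ 0, then det J_ψ(Y₁,Y₂) > 0 for all (Y₁,Y₂) ∈ Γ̄. -/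
/-! Write `D = Ē - μ₁Y₁ - μ₂Y₂` and `G = F̄ - Y₁ - Y₂`. Each `φᵢ` is `Yᵢ gᵢ` with
`gᵢ = μᵢ/(ηᵢD) + 1/(δᵢG) + 1 + μᵢ > 0`, so `J_ψ = diag(g) + diag(Y) A` with
`Aᵢⱼ = μᵢμⱼ/(ηᵢD²) + 1/(δᵢG²)`. Hence
`det J_ψ = g₁g₂ + g₁Y₂A₂₂ + g₂Y₁A₁₁ + Y₁Y₂ det A`, and `det A = σ/(η₁η₂δ₁δ₂D²G²) ≥ 0`. -/

open Set

/-- First partial derivative of a function of two real variables. -/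
noncomputable def pd1 (g : ℝ → ℝ → ℝ) (a b : ℝ) : ℝ := deriv (fun t => g t b) a

/-- Second partial derivative of a function of two real variables. -/
noncomputable def pd2 (g : ℝ → ℝ → ℝ) (a b : ℝ) : ℝ := deriv (fun t => g a t) b

/-- `φ₁ = motifPhi η₁ δ₁ μ₁ μ₂ Ē F̄`, and `φ₂ (Y₁, Y₂) = motifPhi η₂ δ₂ μ₂ μ₁ Ē F̄ Y₂ Y₁`. -/
noncomputable def motifPhi (η δ μ ν E F y z : ℝ) : ℝ :=
  μ * y / (η * (E - μ * y - ν * z)) + y / (δ * (F - y - z)) + (1 + μ) * y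

section
variable {η δ μ ν E F y z : ℝ}

theorem pd1_motifPhi (hη : η ≠ 0) (hδ : δ ≠ 0) (hD : E - μ * y - ν * z ≠ 0)
    (hG : F - y - z ≠ 0) :
    pd1 (motifPhi η δ μ ν E F) y z =
      μ / (η * (E - μ * y - ν * z)) + 1 / (δ * (F - y - z)) + (1 + μ) +
        y * (μ * μ / (η * (E - μ * y - ν * z) ^ 2) + 1 / (δ * (F - y - z) ^ 2)) := by
  have hD' : HasDerivAt (fun t => η * (E - μ * t - ν * z)) (η * -μ) y := by
    simpa using (((hasDerivAt_id' y).const_mul μ).const_sub E).sub_const (ν * z) |>.const_mul η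
  have hG' : HasDerivAt (fun t => δ * (F - t - z)) (δ * -1) y := by
    simpa using ((hasDerivAt_id' y).const_sub F).sub_const z |>.const_mul δ
  have h := ((((hasDerivAt_id' y).const_mul μ).div hD' (mul_ne_zero hη hD)).add
    ((hasDerivAt_id' y).div hG' (mul_ne_zero hδ hG))).add ((hasDerivAt_id' y).const_mul (1 + μ))
  rw [pd1, HasDerivAt.deriv (f := fun t => motifPhi η δ μ ν E F t z) h]
  field_simp
  ring

theorem pd2_motifPhi (hη : η ≠ 0) (hδ : δ ≠ 0) (hD : E - μ * y - ν * z ≠ 0)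
    (hG : F - y - z ≠ 0) :
    pd2 (motifPhi η δ μ ν E F) y z =
      y * (μ * ν / (η * (E - μ * y - ν * z) ^ 2) + 1 / (δ * (F - y - z) ^ 2)) := by
  have hD' : HasDerivAt (fun t => η * (E - μ * y - ν * t)) (η * -ν) z := by
    simpa using (((hasDerivAt_id' z).const_mul ν).const_sub (E - μ * y)).const_mul η
  have hG' : HasDerivAt (fun t => δ * (F - y - t)) (δ * -1) z := by
    simpa using ((hasDerivAt_id' z).const_sub (F - y)).const_mul δ
  have h := (((hasDerivAt_const z (μ * y)).div hD' (mul_ne_zero hη hD)).add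
    ((hasDerivAt_const z y).div hG' (mul_ne_zero hδ hG))).add (hasDerivAt_const z ((1 + μ) * y))
  rw [pd2, HasDerivAt.deriv (f := fun t => motifPhi η δ μ ν E F y t) h]
  field_simp
  ring

end

theorem det_diag_add_diag_mul_pos {g₁ g₂ y₁ y₂ a₁₁ a₁₂ a₂₁ a₂₂ : ℝ} (hg₁ : 0 < g₁) (hg₂ : 0 < g₂)
    (hy₁ : 0 ≤ y₁) (hy₂ : 0 ≤ y₂) (ha₁₁ : 0 ≤ a₁₁) (ha₂₂ : 0 ≤ a₂₂)
    (ha : 0 ≤ a₁₁ * a₂₂ - a₁₂ * a₂₁) :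
    0 < (g₁ + y₁ * a₁₁) * (g₂ + y₂ * a₂₂) - y₁ * a₁₂ * (y₂ * a₂₁) := by
  have expand : (g₁ + y₁ * a₁₁) * (g₂ + y₂ * a₂₂) - y₁ * a₁₂ * (y₂ * a₂₁) =
      g₁ * g₂ + g₁ * (y₂ * a₂₂) + g₂ * (y₁ * a₁₁) + y₁ * y₂ * (a₁₁ * a₂₂ - a₁₂ * a₂₁) := by
    ring
  rw [expand]
  have := mul_pos hg₁ hg₂
  have := mul_nonneg hg₁.le (mul_nonneg hy₂ ha₂₂)
  have := mul_nonneg hg₂.le (mul_nonneg hy₁ ha₁₁)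
  have := mul_nonneg (mul_nonneg hy₁ hy₂) ha
  linarith

theorem coeff_det_eq {η₁ η₂ δ₁ δ₂ μ₁ μ₂ D G : ℝ} (hη₁ : η₁ ≠ 0) (hη₂ : η₂ ≠ 0)
    (hδ₁ : δ₁ ≠ 0) (hδ₂ : δ₂ ≠ 0) (hD : D ≠ 0) (hG : G ≠ 0) :
    (μ₁ * μ₁ / (η₁ * D ^ 2) + 1 / (δ₁ * G ^ 2)) * (μ₂ * μ₂ / (η₂ * D ^ 2) + 1 / (δ₂ * G ^ 2)) -
        (μ₁ * μ₂ / (η₁ * D ^ 2) + 1 / (δ₁ * G ^ 2)) * (μ₂ * μ₁ / (η₂ * D ^ 2) + 1 / (δ₂ * G ^ 2)) =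
      (μ₁ - μ₂) * (μ₁ * δ₁ * η₂ - μ₂ * δ₂ * η₁) / (η₁ * η₂ * δ₁ * δ₂ * D ^ 2 * G ^ 2) := by
  field_simp
  ring

theorem motif_i_det_pos_general (η₁ η₂ δ₁ δ₂ μ₁ μ₂ Ebar Fbar : ℝ)
    (hη₁ : 0 < η₁) (hη₂ : 0 < η₂) (hδ₁ : 0 < δ₁) (hδ₂ : 0 < δ₂)
    (hμ₁ : 0 < μ₁) (hμ₂ : 0 < μ₂)
    (hσ : 0 ≤ (μ₁ - μ₂) * (μ₁ * δ₁ * η₂ - μ₂ * δ₂ * η₁)) :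
    let φ₁ : ℝ → ℝ → ℝ := fun Y₁ Y₂ =>
      μ₁ * Y₁ / (η₁ * (Ebar - μ₁ * Y₁ - μ₂ * Y₂)) +
        Y₁ / (δ₁ * (Fbar - Y₁ - Y₂)) + (1 + μ₁) * Y₁
    let φ₂ : ℝ → ℝ → ℝ := fun Y₁ Y₂ =>
      μ₂ * Y₂ / (η₂ * (Ebar - μ₁ * Y₁ - μ₂ * Y₂)) +
        Y₂ / (δ₂ * (Fbar - Y₁ - Y₂)) + (1 + μ₂) * Y₂
    ∀ Y₁ Y₂ : ℝ, 0 ≤ Y₁ → 0 ≤ Y₂ → Y₁ + Y₂ < Fbar →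
      μ₁ * Y₁ + μ₂ * Y₂ < Ebar →
      0 < pd1 φ₁ Y₁ Y₂ * pd2 φ₂ Y₁ Y₂ - pd2 φ₁ Y₁ Y₂ * pd1 φ₂ Y₁ Y₂ := by
  intro φ₁ φ₂ Y₁ Y₂ hY₁ hY₂ hYF hYE
  have hφ₂ : φ₂ = fun a b => motifPhi η₂ δ₂ μ₂ μ₁ Ebar Fbar b a := by
    funext a b
    simp only [φ₂, motifPhi]
    ring
  have hD : 0 < Ebar - μ₁ * Y₁ - μ₂ * Y₂ := by linarith
  have hG : 0 < Fbar - Y₁ - Y₂ := by linarith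
  have hD_swap : Ebar - μ₂ * Y₂ - μ₁ * Y₁ = Ebar - μ₁ * Y₁ - μ₂ * Y₂ := by ring
  have hG_swap : Fbar - Y₂ - Y₁ = Fbar - Y₁ - Y₂ := by ring
  rw [hφ₂]
  change 0 < pd1 (motifPhi η₁ δ₁ μ₁ μ₂ Ebar Fbar) Y₁ Y₂ * pd1 (motifPhi η₂ δ₂ μ₂ μ₁ Ebar Fbar) Y₂ Y₁
    - pd2 (motifPhi η₁ δ₁ μ₁ μ₂ Ebar Fbar) Y₁ Y₂ * pd2 (motifPhi η₂ δ₂ μ₂ μ₁ Ebar Fbar) Y₂ Y₁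
  rw [pd1_motifPhi hη₁.ne' hδ₁.ne' hD.ne' hG.ne', pd2_motifPhi hη₁.ne' hδ₁.ne' hD.ne' hG.ne',
    pd1_motifPhi hη₂.ne' hδ₂.ne' (hD_swap ▸ hD.ne') (hG_swap ▸ hG.ne'),
    pd2_motifPhi hη₂.ne' hδ₂.ne' (hD_swap ▸ hD.ne') (hG_swap ▸ hG.ne'), hD_swap, hG_swap]
  refine det_diag_add_diag_mul_pos (by positivity) (by positivity) hY₁ hY₂ (by positivity)
    (by positivity) ?_
  rw [coeff_det_eq hη₁.ne' hη₂.ne' hδ₁.ne' hδ₂.ne' hD.ne' hG.ne']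
  exact div_nonneg hσ (by positivity)

/-- Motif (i) (shared kinase and shared phosphatase for two substrates):
if `σ = (μ₁−μ₂)(μ₁δ₁η₂ − μ₂δ₂η₁) ≥ 0` then the Jacobian determinant of
`ψ = (φ₁, φ₂)` is positive on all of `Γ̄`. -/
theorem motif_i_det_pos (η₁ η₂ δ₁ δ₂ μ₁ μ₂ Ebar Fbar : ℝ)
    (hη₁ : 0 < η₁) (hη₂ : 0 < η₂) (hδ₁ : 0 < δ₁) (hδ₂ : 0 < δ₂)
    (hμ₁ : 0 < μ₁) (hμ₂ : 0 < μ₂) (hE : 0 < Ebar) (hF : 0 < Fbar)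
    (hσ : 0 ≤ (μ₁ - μ₂) * (μ₁ * δ₁ * η₂ - μ₂ * δ₂ * η₁)) :
    let φ₁ : ℝ → ℝ → ℝ := fun Y₁ Y₂ =>
      μ₁ * Y₁ / (η₁ * (Ebar - μ₁ * Y₁ - μ₂ * Y₂)) +
        Y₁ / (δ₁ * (Fbar - Y₁ - Y₂)) + (1 + μ₁) * Y₁
    let φ₂ : ℝ → ℝ → ℝ := fun Y₁ Y₂ =>
      μ₂ * Y₂ / (η₂ * (Ebar - μ₁ * Y₁ - μ₂ * Y₂)) +
        Y₂ / (δ₂ * (Fbar - Y₁ - Y₂)) + (1 + μ₂) * Y₂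
    ∀ Y₁ Y₂ : ℝ, 0 ≤ Y₁ → 0 ≤ Y₂ → Y₁ + Y₂ < Fbar →
      μ₁ * Y₁ + μ₂ * Y₂ < Ebar →
      0 < pd1 φ₁ Y₁ Y₂ * pd2 φ₂ Y₁ Y₂ - pd2 φ₁ Y₁ Y₂ * pd1 φ₂ Y₁ Y₂ :=
  motif_i_det_pos_general η₁ η₂ δ₁ δ₂ μ₁ μ₂ Ebar Fbar hη₁ hη₂ hδ₁ hδ₂ hμ₁ hμ₂ hσ
end

section
/- In the setting of Motif (i) with σ = (μ₁−μ₂)(μ₁δ₁η₂ − μ₂δ₂η₁) < 0, if either (a) μ₁ > μ₂ and (μ₂F̄ ≥ Ē or Ē ≥ μ₁F̄), or (b) μ₂ > μ₁ and (μ₁F̄ ≥ Ē or Ē ≥ μ₂F̄), then det J_ψ(Y₁,Y₂) > 0 for all (Y₁,Y₂) ∈ Γ̄. -/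
open Set

/-! Write `E = Ebar - μ₁Y₁ - μ₂Y₂` and `F = Fbar - Y₁ - Y₂` for the two slacks, and
`aᵢ = 1 / (ηᵢE²)`, `bᵢ = 1 / (δᵢF²)`. The Jacobian of `ψ` is `M + diag(1 + μ₁, 1 + μ₂)` with
`M` linear in `a, b`, and expanding gives
`det M = μ₁μ₂ Ebar E a₁a₂ + Fbar F b₁b₂ + μ₁G₁ a₁b₂ + μ₂G₂ a₂b₁`, where
`G₁ = Ebar (Fbar - Y₁) - μ₂ Fbar Y₂` and `G₂ = Ebar (Fbar - Y₂) - μ₁ Fbar Y₁`.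
Since `G₁ = Ebar F + Y₂ (Ebar - μ₂Fbar) = Fbar E + Y₁ (μ₁Fbar - Ebar)`, `G₁ > 0` as soon as
`Ebar` does not lie strictly between `μ₁Fbar` and `μ₂Fbar`; symmetrically for `G₂`. -/

theorem hasDerivAt_motif_component {μ η δ κ x Y' E' F' : ℝ} {Y E F : ℝ → ℝ}
    (hη : η ≠ 0) (hδ : δ ≠ 0) (hY : HasDerivAt Y Y' x) (hE : HasDerivAt E E' x)
    (hF : HasDerivAt F F' x) (hE₀ : E x ≠ 0) (hF₀ : F x ≠ 0) :
    HasDerivAt (fun t => μ * Y t / (η * E t) + Y t / (δ * F t) + κ * Y t)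
      (μ * (Y' * E x - Y x * E') / (η * E x ^ 2) + (Y' * F x - Y x * F') / (δ * F x ^ 2)
        + κ * Y') x := by
  have h₁ := (hY.const_mul μ).div (hE.const_mul η) (mul_ne_zero hη hE₀)
  have h₂ := hY.div (hF.const_mul δ) (mul_ne_zero hδ hF₀)
  refine ((h₁.add h₂).add (hY.const_mul κ)).congr_deriv ?_
  field_simp

theorem le_mul_or_mul_le_of_le {a b c x : ℝ} (hx : 0 ≤ x) (h : b ≤ a) :
    c ≤ a * x ∨ b * x ≤ c :=
  (le_total c (a * x)).imp_right fun hc => (mul_le_mul_of_nonneg_right h hx).trans hc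

theorem motif_cross_coeff_pos {μ₁ μ₂ Ebar Fbar Y₁ Y₂ : ℝ} (hμ₁ : 0 ≤ μ₁) (hμ₂ : 0 ≤ μ₂)
    (hY₁ : 0 ≤ Y₁) (hY₂ : 0 ≤ Y₂) (hF : Y₁ + Y₂ < Fbar)
    (hE : μ₁ * Y₁ + μ₂ * Y₂ < Ebar) (h : Ebar ≤ μ₁ * Fbar ∨ μ₂ * Fbar ≤ Ebar) :
    0 < Ebar * (Fbar - Y₁) - μ₂ * Fbar * Y₂ := by
  rcases h with h | h
  · have : 0 < Fbar * (Ebar - μ₁ * Y₁ - μ₂ * Y₂) := mul_pos (by linarith) (by linarith)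
    nlinarith [mul_nonneg hY₁ (sub_nonneg.2 h)]
  · have : 0 < Ebar * (Fbar - Y₁ - Y₂) := mul_pos (by nlinarith) (by linarith)
    nlinarith [mul_nonneg hY₂ (sub_nonneg.2 h)]

theorem motif_core_det_eq (a₁ a₂ b₁ b₂ μ₁ μ₂ Ebar Fbar Y₁ Y₂ : ℝ) :
    (μ₁ * (Ebar - μ₂ * Y₂) * a₁ + (Fbar - Y₂) * b₁)
        * (μ₂ * (Ebar - μ₁ * Y₁) * a₂ + (Fbar - Y₁) * b₂)
      - (μ₁ * μ₂ * Y₁ * a₁ + Y₁ * b₁) * (μ₁ * μ₂ * Y₂ * a₂ + Y₂ * b₂)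
    = μ₁ * μ₂ * Ebar * (Ebar - μ₁ * Y₁ - μ₂ * Y₂) * (a₁ * a₂)
      + Fbar * (Fbar - Y₁ - Y₂) * (b₁ * b₂)
      + μ₁ * (Ebar * (Fbar - Y₁) - μ₂ * Fbar * Y₂) * (a₁ * b₂)
      + μ₂ * (Ebar * (Fbar - Y₂) - μ₁ * Fbar * Y₁) * (a₂ * b₁) := by
  ring

theorem det_add_diagonal_pos {A B C D κ₁ κ₂ : ℝ} (hdet : 0 < A * D - B * C) (hA : 0 ≤ A)
    (hD : 0 ≤ D) (hκ₁ : 0 ≤ κ₁) (hκ₂ : 0 ≤ κ₂) :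
    0 < (A + κ₁) * (D + κ₂) - B * C := by
  nlinarith [mul_nonneg hκ₁ hD, mul_nonneg hκ₂ hA, mul_nonneg hκ₁ hκ₂]

theorem motif_det_pos {a₁ a₂ b₁ b₂ κ₁ κ₂ μ₁ μ₂ Ebar Fbar Y₁ Y₂ : ℝ}
    (ha₁ : 0 ≤ a₁) (ha₂ : 0 ≤ a₂) (hb₁ : 0 < b₁) (hb₂ : 0 < b₂) (hκ₁ : 0 ≤ κ₁) (hκ₂ : 0 ≤ κ₂)
    (hμ₁ : 0 ≤ μ₁) (hμ₂ : 0 ≤ μ₂) (hY₁ : 0 ≤ Y₁) (hY₂ : 0 ≤ Y₂) (hF : Y₁ + Y₂ < Fbar)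
    (hE : μ₁ * Y₁ + μ₂ * Y₂ < Ebar) (h₁ : Ebar ≤ μ₁ * Fbar ∨ μ₂ * Fbar ≤ Ebar)
    (h₂ : Ebar ≤ μ₂ * Fbar ∨ μ₁ * Fbar ≤ Ebar) :
    0 < (μ₁ * (Ebar - μ₂ * Y₂) * a₁ + (Fbar - Y₂) * b₁ + κ₁)
        * (μ₂ * (Ebar - μ₁ * Y₁) * a₂ + (Fbar - Y₁) * b₂ + κ₂)
      - (μ₁ * μ₂ * Y₁ * a₁ + Y₁ * b₁) * (μ₁ * μ₂ * Y₂ * a₂ + Y₂ * b₂) := by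
  have hG₁ := motif_cross_coeff_pos hμ₁ hμ₂ hY₁ hY₂ hF hE h₁
  have hG₂ := motif_cross_coeff_pos hμ₂ hμ₁ hY₂ hY₁ (by linarith) (by linarith) h₂
  have hEbar : 0 ≤ Ebar := by nlinarith
  have hFbar : 0 < Fbar := by linarith
  have hE₀ : 0 ≤ Ebar - μ₁ * Y₁ - μ₂ * Y₂ := by linarith
  have hF₀ : 0 < Fbar - Y₁ - Y₂ := by linarith
  have hcore : 0 < (μ₁ * (Ebar - μ₂ * Y₂) * a₁ + (Fbar - Y₂) * b₁)
        * (μ₂ * (Ebar - μ₁ * Y₁) * a₂ + (Fbar - Y₁) * b₂)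
      - (μ₁ * μ₂ * Y₁ * a₁ + Y₁ * b₁) * (μ₁ * μ₂ * Y₂ * a₂ + Y₂ * b₂) := by
    rw [motif_core_det_eq]
    have := mul_nonneg (mul_nonneg (mul_nonneg (mul_nonneg hμ₁ hμ₂) hEbar) hE₀)
      (mul_nonneg ha₁ ha₂)
    have := mul_pos (mul_pos hFbar hF₀) (mul_pos hb₁ hb₂)
    have := mul_nonneg (mul_nonneg hμ₁ hG₁.le) (mul_nonneg ha₁ hb₂.le)
    have := mul_nonneg (mul_nonneg hμ₂ hG₂.le) (mul_nonneg ha₂ hb₁.le)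
    linarith
  have hE₁ : 0 ≤ Ebar - μ₁ * Y₁ := by nlinarith
  have hE₂ : 0 ≤ Ebar - μ₂ * Y₂ := by nlinarith
  have hF₁ : 0 ≤ Fbar - Y₁ := by linarith
  have hF₂ : 0 ≤ Fbar - Y₂ := by linarith
  exact det_add_diagonal_pos hcore
    (add_nonneg (mul_nonneg (mul_nonneg hμ₁ hE₂) ha₁) (mul_nonneg hF₂ hb₁.le))
    (add_nonneg (mul_nonneg (mul_nonneg hμ₂ hE₁) ha₂) (mul_nonneg hF₁ hb₂.le)) hκ₁ hκ₂

theorem motif_i_det_pos_sigma_neg_general (η₁ η₂ δ₁ δ₂ μ₁ μ₂ Ebar Fbar : ℝ)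
    (hη₁ : 0 < η₁) (hη₂ : 0 < η₂) (hδ₁ : 0 < δ₁) (hδ₂ : 0 < δ₂)
    (hμ₁ : 0 < μ₁) (hμ₂ : 0 < μ₂)
    (hcase : (μ₂ < μ₁ ∧ (Ebar ≤ μ₂ * Fbar ∨ μ₁ * Fbar ≤ Ebar)) ∨
             (μ₁ < μ₂ ∧ (Ebar ≤ μ₁ * Fbar ∨ μ₂ * Fbar ≤ Ebar))) :
    let φ₁ : ℝ → ℝ → ℝ := fun Y₁ Y₂ =>
      μ₁ * Y₁ / (η₁ * (Ebar - μ₁ * Y₁ - μ₂ * Y₂)) +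
        Y₁ / (δ₁ * (Fbar - Y₁ - Y₂)) + (1 + μ₁) * Y₁
    let φ₂ : ℝ → ℝ → ℝ := fun Y₁ Y₂ =>
      μ₂ * Y₂ / (η₂ * (Ebar - μ₁ * Y₁ - μ₂ * Y₂)) +
        Y₂ / (δ₂ * (Fbar - Y₁ - Y₂)) + (1 + μ₂) * Y₂
    ∀ Y₁ Y₂ : ℝ, 0 ≤ Y₁ → 0 ≤ Y₂ → Y₁ + Y₂ < Fbar →
      μ₁ * Y₁ + μ₂ * Y₂ < Ebar →
      0 < pd1 φ₁ Y₁ Y₂ * pd2 φ₂ Y₁ Y₂ - pd2 φ₁ Y₁ Y₂ * pd1 φ₂ Y₁ Y₂ := by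
  intro φ₁ φ₂ Y₁ Y₂ hY₁ hY₂ hF hE
  have hE₀ : Ebar - μ₁ * Y₁ - μ₂ * Y₂ ≠ 0 := by linarith
  have hF₀ : Fbar - Y₁ - Y₂ ≠ 0 := by linarith
  have hE₁ := ((hasDerivAt_id' Y₁).const_mul μ₁ |>.const_sub Ebar).sub_const (μ₂ * Y₂)
  have hE₂ := (hasDerivAt_id' Y₂).const_mul μ₂ |>.const_sub (Ebar - μ₁ * Y₁)
  have hF₁ := ((hasDerivAt_id' Y₁).const_sub Fbar).sub_const Y₂
  have hF₂ := (hasDerivAt_id' Y₂).const_sub (Fbar - Y₁)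
  have d₁₁ : pd1 φ₁ Y₁ Y₂ = _ := (hasDerivAt_motif_component (μ := μ₁) (κ := 1 + μ₁)
    hη₁.ne' hδ₁.ne' (hasDerivAt_id' Y₁) hE₁ hF₁ hE₀ hF₀).deriv
  have d₂₂ : pd2 φ₂ Y₁ Y₂ = _ := (hasDerivAt_motif_component (μ := μ₂) (κ := 1 + μ₂)
    hη₂.ne' hδ₂.ne' (hasDerivAt_id' Y₂) hE₂ hF₂ hE₀ hF₀).deriv
  have d₂₁ : pd2 φ₁ Y₁ Y₂ = _ := (hasDerivAt_motif_component (μ := μ₁) (κ := 1 + μ₁)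
    hη₁.ne' hδ₁.ne' (hasDerivAt_const Y₂ Y₁) hE₂ hF₂ hE₀ hF₀).deriv
  have d₁₂ : pd1 φ₂ Y₁ Y₂ = _ := (hasDerivAt_motif_component (μ := μ₂) (κ := 1 + μ₂)
    hη₂.ne' hδ₂.ne' (hasDerivAt_const Y₁ Y₂) hE₁ hF₁ hE₀ hF₀).deriv
  have hFbar : 0 ≤ Fbar := by linarith
  obtain ⟨h₁, h₂⟩ : (Ebar ≤ μ₁ * Fbar ∨ μ₂ * Fbar ≤ Ebar) ∧
      (Ebar ≤ μ₂ * Fbar ∨ μ₁ * Fbar ≤ Ebar) := by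
    rcases hcase with ⟨hμ, h⟩ | ⟨hμ, h⟩
    · exact ⟨le_mul_or_mul_le_of_le hFbar hμ.le, h⟩
    · exact ⟨h, le_mul_or_mul_le_of_le hFbar hμ.le⟩
  rw [d₁₁, d₂₂, d₂₁, d₁₂]
  convert motif_det_pos (a₁ := (η₁ * (Ebar - μ₁ * Y₁ - μ₂ * Y₂) ^ 2)⁻¹)
    (a₂ := (η₂ * (Ebar - μ₁ * Y₁ - μ₂ * Y₂) ^ 2)⁻¹) (b₁ := (δ₁ * (Fbar - Y₁ - Y₂) ^ 2)⁻¹)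
    (b₂ := (δ₂ * (Fbar - Y₁ - Y₂) ^ 2)⁻¹) (κ₁ := 1 + μ₁) (κ₂ := 1 + μ₂)
    (by positivity) (by positivity) (by positivity) (by positivity) (by positivity)
    (by positivity) hμ₁.le hμ₂.le hY₁ hY₂ hF hE h₁ h₂ using 1
  ring

/-- Motif (i): even when `σ < 0`, if (a) `μ₁ > μ₂` and (`μ₂F̄ ≥ Ē` or
`Ē ≥ μ₁F̄`), or (b) `μ₂ > μ₁` and (`μ₁F̄ ≥ Ē` or `Ē ≥ μ₂F̄`), then the
Jacobian determinant of `ψ = (φ₁, φ₂)` is positive on all of `Γ̄`. -/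
theorem motif_i_det_pos_sigma_neg (η₁ η₂ δ₁ δ₂ μ₁ μ₂ Ebar Fbar : ℝ)
    (hη₁ : 0 < η₁) (hη₂ : 0 < η₂) (hδ₁ : 0 < δ₁) (hδ₂ : 0 < δ₂)
    (hμ₁ : 0 < μ₁) (hμ₂ : 0 < μ₂) (hE : 0 < Ebar) (hF : 0 < Fbar)
    (hσ : (μ₁ - μ₂) * (μ₁ * δ₁ * η₂ - μ₂ * δ₂ * η₁) < 0)
    (hcase : (μ₂ < μ₁ ∧ (Ebar ≤ μ₂ * Fbar ∨ μ₁ * Fbar ≤ Ebar)) ∨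
             (μ₁ < μ₂ ∧ (Ebar ≤ μ₁ * Fbar ∨ μ₂ * Fbar ≤ Ebar))) :
    let φ₁ : ℝ → ℝ → ℝ := fun Y₁ Y₂ =>
      μ₁ * Y₁ / (η₁ * (Ebar - μ₁ * Y₁ - μ₂ * Y₂)) +
        Y₁ / (δ₁ * (Fbar - Y₁ - Y₂)) + (1 + μ₁) * Y₁
    let φ₂ : ℝ → ℝ → ℝ := fun Y₁ Y₂ =>
      μ₂ * Y₂ / (η₂ * (Ebar - μ₁ * Y₁ - μ₂ * Y₂)) +
        Y₂ / (δ₂ * (Fbar - Y₁ - Y₂)) + (1 + μ₂) * Y₂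
    ∀ Y₁ Y₂ : ℝ, 0 ≤ Y₁ → 0 ≤ Y₂ → Y₁ + Y₂ < Fbar →
      μ₁ * Y₁ + μ₂ * Y₂ < Ebar →
      0 < pd1 φ₁ Y₁ Y₂ * pd2 φ₂ Y₁ Y₂ - pd2 φ₁ Y₁ Y₂ * pd1 φ₂ Y₁ Y₂ :=
  motif_i_det_pos_sigma_neg_general η₁ η₂ δ₁ δ₂ μ₁ μ₂ Ebar Fbar hη₁ hη₂ hδ₁ hδ₂ hμ₁ hμ₂ hcase
end

section
/- In the setting of Motif (i), if σ = (μ₁−μ₂)(μ₁δ₁η₂ − μ₂δ₂η₁) < 0 and either μ₁F̄ > Ē > μ₂F̄ or μ₂F̄ > Ē > μ₁F̄, then there exist points (Y₁,Y₂) ∈ Γ̄ with det J_ψ(Y₁,Y₂) < 0. -/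
open Set

/-- The rescaled (by `t⁴`) Jacobian determinant along the segment towards the
corner point of `Γ̄`, as a polynomial-type (continuous) function of `t`. -/
noncomputable def Naux (η₁ η₂ δ₁ δ₂ μ₁ μ₂ E F A B s : ℝ) : ℝ :=
  ((μ₁ * η₁ * s * E + μ₁ ^ 2 * η₁ * (A * (1 - s))) * ((η₁ * E) ^ 2)⁻¹ +
      (δ₁ * s * F + δ₁ * (A * (1 - s))) * ((δ₁ * F) ^ 2)⁻¹ + (1 + μ₁) * s ^ 2) *
    ((μ₂ * η₂ * s * E + μ₂ ^ 2 * η₂ * (B * (1 - s))) * ((η₂ * E) ^ 2)⁻¹ +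
      (δ₂ * s * F + δ₂ * (B * (1 - s))) * ((δ₂ * F) ^ 2)⁻¹ + (1 + μ₂) * s ^ 2) -
  ((μ₁ * (A * (1 - s)) * η₁ * μ₂) * ((η₁ * E) ^ 2)⁻¹ +
      (A * (1 - s)) * δ₁ * ((δ₁ * F) ^ 2)⁻¹) *
    ((μ₂ * (B * (1 - s)) * η₂ * μ₁) * ((η₂ * E) ^ 2)⁻¹ +
      (B * (1 - s)) * δ₂ * ((δ₂ * F) ^ 2)⁻¹)

lemma Naux_continuous (η₁ η₂ δ₁ δ₂ μ₁ μ₂ E F A B : ℝ) :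
    Continuous (Naux η₁ η₂ δ₁ δ₂ μ₁ μ₂ E F A B) := by
  unfold Naux; fun_prop

lemma aux_div (p₁ p₂ p₃ p₄ t : ℝ) (ht : t ≠ 0) :
    p₁ / t ^ 2 * (p₄ / t ^ 2) - p₂ / t ^ 2 * (p₃ / t ^ 2) =
      (p₁ * p₄ - p₂ * p₃) / t ^ 4 := by
  rw [div_mul_div_comm, div_mul_div_comm, ← sub_div, show t ^ 2 * t ^ 2 = t ^ 4 by ring]

/-- Motif (i): if `σ < 0` and either `μ₁F̄ > Ē > μ₂F̄` or `μ₂F̄ > Ē > μ₁F̄`,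
then there are points of `Γ̄` where the Jacobian determinant of
`ψ = (φ₁, φ₂)` is negative (hence multistationarity occurs). -/
theorem motif_i_det_neg (η₁ η₂ δ₁ δ₂ μ₁ μ₂ Ebar Fbar : ℝ)
    (hη₁ : 0 < η₁) (hη₂ : 0 < η₂) (hδ₁ : 0 < δ₁) (hδ₂ : 0 < δ₂)
    (hμ₁ : 0 < μ₁) (hμ₂ : 0 < μ₂) (hE : 0 < Ebar) (hF : 0 < Fbar)
    (hσ : (μ₁ - μ₂) * (μ₁ * δ₁ * η₂ - μ₂ * δ₂ * η₁) < 0)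
    (hcase : (μ₂ * Fbar < Ebar ∧ Ebar < μ₁ * Fbar) ∨
             (μ₁ * Fbar < Ebar ∧ Ebar < μ₂ * Fbar)) :
    let φ₁ : ℝ → ℝ → ℝ := fun Y₁ Y₂ =>
      μ₁ * Y₁ / (η₁ * (Ebar - μ₁ * Y₁ - μ₂ * Y₂)) +
        Y₁ / (δ₁ * (Fbar - Y₁ - Y₂)) + (1 + μ₁) * Y₁
    let φ₂ : ℝ → ℝ → ℝ := fun Y₁ Y₂ =>
      μ₂ * Y₂ / (η₂ * (Ebar - μ₁ * Y₁ - μ₂ * Y₂)) +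
        Y₂ / (δ₂ * (Fbar - Y₁ - Y₂)) + (1 + μ₂) * Y₂
    ∃ Y₁ Y₂ : ℝ, 0 ≤ Y₁ ∧ 0 ≤ Y₂ ∧ Y₁ + Y₂ < Fbar ∧
      μ₁ * Y₁ + μ₂ * Y₂ < Ebar ∧
      pd1 φ₁ Y₁ Y₂ * pd2 φ₂ Y₁ Y₂ - pd2 φ₁ Y₁ Y₂ * pd1 φ₂ Y₁ Y₂ < 0 := by
  intro φ₁ φ₂
  -- the corner point (A, B) of Γ̄
  obtain ⟨A, B, hA, hB, hAB, hμAB⟩ :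
      ∃ A B : ℝ, 0 < A ∧ 0 < B ∧ A + B = Fbar ∧ μ₁ * A + μ₂ * B = Ebar := by
    have hne : μ₁ - μ₂ ≠ 0 := by
      rcases hcase with ⟨h1, h2⟩ | ⟨h1, h2⟩ <;> intro h <;> nlinarith
    refine ⟨(Ebar - μ₂ * Fbar) / (μ₁ - μ₂), (μ₁ * Fbar - Ebar) / (μ₁ - μ₂),
      ?_, ?_, ?_, ?_⟩
    · rcases hcase with ⟨h1, h2⟩ | ⟨h1, h2⟩
      · apply div_pos (by linarith) (by nlinarith)
      · rw [div_pos_iff]; right; constructor <;> nlinarith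
    · rcases hcase with ⟨h1, h2⟩ | ⟨h1, h2⟩
      · apply div_pos (by linarith) (by nlinarith)
      · rw [div_pos_iff]; right; constructor <;> nlinarith
    · field_simp; ring
    · field_simp; ring
  -- choose t ∈ (0,1) with Naux … t < 0
  obtain ⟨t, ⟨hNt, ht1⟩, ht0⟩ :
      ∃ t : ℝ, (t ∈ (Naux η₁ η₂ δ₁ δ₂ μ₁ μ₂ Ebar Fbar A B) ⁻¹' (Iio 0) ∧
        t ∈ Iio 1) ∧ t ∈ Ioi (0:ℝ) := by
    have h0 : Naux η₁ η₂ δ₁ δ₂ μ₁ μ₂ Ebar Fbar A B 0 < 0 := by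
      have h00 : Naux η₁ η₂ δ₁ δ₂ μ₁ μ₂ Ebar Fbar A B 0 =
          ((μ₁ - μ₂) * (μ₁ * δ₁ * η₂ - μ₂ * δ₂ * η₁) * (A * B)) *
            (η₁ * η₂ * δ₁ * δ₂ * Ebar ^ 2 * Fbar ^ 2)⁻¹ := by
        unfold Naux
        field_simp
        ring
      rw [h00]
      exact mul_neg_of_neg_of_pos
        (mul_neg_of_neg_of_pos hσ (mul_pos hA hB)) (by positivity)
    have hmem : ((Naux η₁ η₂ δ₁ δ₂ μ₁ μ₂ Ebar Fbar A B) ⁻¹' (Iio 0) ∩ Iio 1) ∈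
        nhds (0:ℝ) :=
      Filter.inter_mem
        ((Naux_continuous η₁ η₂ δ₁ δ₂ μ₁ μ₂ Ebar Fbar A B).continuousAt.preimage_mem_nhds
          (Iio_mem_nhds h0))
        (Iio_mem_nhds one_pos)
    have hmem' := Filter.inter_mem (nhdsWithin_le_nhds (s := Ioi (0:ℝ)) hmem)
      (self_mem_nhdsWithin (a := (0:ℝ)) (s := Ioi (0:ℝ)))
    obtain ⟨t, ht⟩ := Filter.nonempty_of_mem hmem'
    exact ⟨t, ht⟩
  rw [mem_Ioi] at ht0
  rw [mem_Iio] at ht1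
  have hNt' : Naux η₁ η₂ δ₁ δ₂ μ₁ μ₂ Ebar Fbar A B t < 0 := hNt
  clear hNt
  refine ⟨A * (1 - t), B * (1 - t), ?_, ?_, ?_, ?_, ?_⟩
  · exact mul_nonneg hA.le (by linarith)
  · exact mul_nonneg hB.le (by linarith)
  · have h5 : A * (1 - t) + B * (1 - t) = Fbar - t * Fbar := by
      linear_combination (1 - t) * hAB
    rw [h5]
    nlinarith [mul_pos ht0 hF]
  · have h5 : μ₁ * (A * (1 - t)) + μ₂ * (B * (1 - t)) = Ebar - t * Ebar := by
      linear_combination (1 - t) * hμAB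
    rw [h5]
    nlinarith [mul_pos ht0 hE]
  · -- the main inequality
    have hG' : Ebar - μ₁ * (A * (1 - t)) - μ₂ * (B * (1 - t)) = t * Ebar := by
      linear_combination (t - 1) * hμAB
    have hD' : Fbar - A * (1 - t) - B * (1 - t) = t * Fbar := by
      linear_combination (t - 1) * hAB
    have hg1 : η₁ * (Ebar - μ₁ * (A * (1 - t)) - μ₂ * (B * (1 - t))) ≠ 0 := by
      rw [hG']; exact (mul_pos hη₁ (mul_pos ht0 hE)).ne'
    have hg2 : η₂ * (Ebar - μ₁ * (A * (1 - t)) - μ₂ * (B * (1 - t))) ≠ 0 := by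
      rw [hG']; exact (mul_pos hη₂ (mul_pos ht0 hE)).ne'
    have hd1 : δ₁ * (Fbar - A * (1 - t) - B * (1 - t)) ≠ 0 := by
      rw [hD']; exact (mul_pos hδ₁ (mul_pos ht0 hF)).ne'
    have hd2 : δ₂ * (Fbar - A * (1 - t) - B * (1 - t)) ≠ 0 := by
      rw [hD']; exact (mul_pos hδ₂ (mul_pos ht0 hF)).ne'
    have htne : t ≠ 0 := ht0.ne'
    -- inner linear derivatives
    have hin1 : HasDerivAt (fun s : ℝ => Ebar - μ₁ * s - μ₂ * (B * (1 - t)))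
        (-μ₁) (A * (1 - t)) := by
      simpa using (((hasDerivAt_const (A * (1 - t)) Ebar).sub
        ((hasDerivAt_id (A * (1 - t))).const_mul μ₁)).sub_const (μ₂ * (B * (1 - t))))
    have hin2 : HasDerivAt (fun s : ℝ => Fbar - s - B * (1 - t))
        (-1) (A * (1 - t)) := by
      simpa using (((hasDerivAt_const (A * (1 - t)) Fbar).sub
        (hasDerivAt_id (A * (1 - t)))).sub_const (B * (1 - t)))
    have hin3 : HasDerivAt (fun s : ℝ => Ebar - μ₁ * (A * (1 - t)) - μ₂ * s)
        (-μ₂) (B * (1 - t)) := by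
      simpa using ((hasDerivAt_id (B * (1 - t))).const_mul μ₂).const_sub
        (Ebar - μ₁ * (A * (1 - t)))
    have hin4 : HasDerivAt (fun s : ℝ => Fbar - A * (1 - t) - s)
        (-1) (B * (1 - t)) := by
      simpa using (hasDerivAt_id (B * (1 - t))).const_sub
        (Fbar - A * (1 - t))
    -- pd1 φ₁
    have e1 : pd1 φ₁ (A * (1 - t)) (B * (1 - t)) =
        ((μ₁ * η₁ * t * Ebar + μ₁ ^ 2 * η₁ * (A * (1 - t))) * ((η₁ * Ebar) ^ 2)⁻¹ +
          (δ₁ * t * Fbar + δ₁ * (A * (1 - t))) * ((δ₁ * Fbar) ^ 2)⁻¹ +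
          (1 + μ₁) * t ^ 2) / t ^ 2 := by
      have hnum : HasDerivAt (fun s : ℝ => μ₁ * s) μ₁ (A * (1 - t)) := by
        simpa using (hasDerivAt_id (A * (1 - t))).const_mul μ₁
      have hq3 : HasDerivAt (fun s : ℝ => (1 + μ₁) * s) (1 + μ₁) (A * (1 - t)) := by
        simpa using (hasDerivAt_id (A * (1 - t))).const_mul (1 + μ₁)
      have htot := (((hnum.div (hin1.const_mul η₁) hg1).add
        ((hasDerivAt_id (A * (1 - t))).div (hin2.const_mul δ₁) hd1)).add hq3).deriv
      calc pd1 φ₁ (A * (1 - t)) (B * (1 - t)) =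
          (μ₁ * (η₁ * (Ebar - μ₁ * (A * (1 - t)) - μ₂ * (B * (1 - t)))) -
              μ₁ * (A * (1 - t)) * (η₁ * -μ₁)) /
            (η₁ * (Ebar - μ₁ * (A * (1 - t)) - μ₂ * (B * (1 - t)))) ^ 2 +
          (1 * (δ₁ * (Fbar - A * (1 - t) - B * (1 - t))) -
              A * (1 - t) * (δ₁ * -1)) /
            (δ₁ * (Fbar - A * (1 - t) - B * (1 - t))) ^ 2 + (1 + μ₁) := htot
        _ = _ := by
          rw [hG', hD']
          field_simp
          ring
    -- pd2 φ₁
    have e2 : pd2 φ₁ (A * (1 - t)) (B * (1 - t)) =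
        ((μ₁ * (A * (1 - t)) * η₁ * μ₂) * ((η₁ * Ebar) ^ 2)⁻¹ +
          (A * (1 - t)) * δ₁ * ((δ₁ * Fbar) ^ 2)⁻¹) / t ^ 2 := by
      have htot := ((((hasDerivAt_const (B * (1 - t)) (μ₁ * (A * (1 - t)))).div
        (hin3.const_mul η₁) hg1).add
        ((hasDerivAt_const (B * (1 - t)) (A * (1 - t))).div
          (hin4.const_mul δ₁) hd1)).add
        (hasDerivAt_const (B * (1 - t)) ((1 + μ₁) * (A * (1 - t))))).deriv
      calc pd2 φ₁ (A * (1 - t)) (B * (1 - t)) =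
          (0 * (η₁ * (Ebar - μ₁ * (A * (1 - t)) - μ₂ * (B * (1 - t)))) -
              μ₁ * (A * (1 - t)) * (η₁ * -μ₂)) /
            (η₁ * (Ebar - μ₁ * (A * (1 - t)) - μ₂ * (B * (1 - t)))) ^ 2 +
          (0 * (δ₁ * (Fbar - A * (1 - t) - B * (1 - t))) -
              A * (1 - t) * (δ₁ * -1)) /
            (δ₁ * (Fbar - A * (1 - t) - B * (1 - t))) ^ 2 + 0 := htot
        _ = _ := by
          rw [hG', hD']
          field_simp
          ring
    -- pd1 φ₂
    have e3 : pd1 φ₂ (A * (1 - t)) (B * (1 - t)) =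
        ((μ₂ * (B * (1 - t)) * η₂ * μ₁) * ((η₂ * Ebar) ^ 2)⁻¹ +
          (B * (1 - t)) * δ₂ * ((δ₂ * Fbar) ^ 2)⁻¹) / t ^ 2 := by
      have htot := ((((hasDerivAt_const (A * (1 - t)) (μ₂ * (B * (1 - t)))).div
        (hin1.const_mul η₂) hg2).add
        ((hasDerivAt_const (A * (1 - t)) (B * (1 - t))).div
          (hin2.const_mul δ₂) hd2)).add
        (hasDerivAt_const (A * (1 - t)) ((1 + μ₂) * (B * (1 - t))))).deriv
      calc pd1 φ₂ (A * (1 - t)) (B * (1 - t)) =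
          (0 * (η₂ * (Ebar - μ₁ * (A * (1 - t)) - μ₂ * (B * (1 - t)))) -
              μ₂ * (B * (1 - t)) * (η₂ * -μ₁)) /
            (η₂ * (Ebar - μ₁ * (A * (1 - t)) - μ₂ * (B * (1 - t)))) ^ 2 +
          (0 * (δ₂ * (Fbar - A * (1 - t) - B * (1 - t))) -
              B * (1 - t) * (δ₂ * -1)) /
            (δ₂ * (Fbar - A * (1 - t) - B * (1 - t))) ^ 2 + 0 := htot
        _ = _ := by
          rw [hG', hD']
          field_simp
          ring
    -- pd2 φ₂
    have e4 : pd2 φ₂ (A * (1 - t)) (B * (1 - t)) =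
        ((μ₂ * η₂ * t * Ebar + μ₂ ^ 2 * η₂ * (B * (1 - t))) * ((η₂ * Ebar) ^ 2)⁻¹ +
          (δ₂ * t * Fbar + δ₂ * (B * (1 - t))) * ((δ₂ * Fbar) ^ 2)⁻¹ +
          (1 + μ₂) * t ^ 2) / t ^ 2 := by
      have hnum : HasDerivAt (fun s : ℝ => μ₂ * s) μ₂ (B * (1 - t)) := by
        simpa using (hasDerivAt_id (B * (1 - t))).const_mul μ₂
      have hq3 : HasDerivAt (fun s : ℝ => (1 + μ₂) * s) (1 + μ₂) (B * (1 - t)) := by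
        simpa using (hasDerivAt_id (B * (1 - t))).const_mul (1 + μ₂)
      have htot := (((hnum.div (hin3.const_mul η₂) hg2).add
        ((hasDerivAt_id (B * (1 - t))).div (hin4.const_mul δ₂) hd2)).add hq3).deriv
      calc pd2 φ₂ (A * (1 - t)) (B * (1 - t)) =
          (μ₂ * (η₂ * (Ebar - μ₁ * (A * (1 - t)) - μ₂ * (B * (1 - t)))) -
              μ₂ * (B * (1 - t)) * (η₂ * -μ₂)) /
            (η₂ * (Ebar - μ₁ * (A * (1 - t)) - μ₂ * (B * (1 - t)))) ^ 2 +
          (1 * (δ₂ * (Fbar - A * (1 - t) - B * (1 - t))) -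
              B * (1 - t) * (δ₂ * -1)) /
            (δ₂ * (Fbar - A * (1 - t) - B * (1 - t))) ^ 2 + (1 + μ₂) := htot
        _ = _ := by
          rw [hG', hD']
          field_simp
          ring
    rw [e1, e2, e3, e4, aux_div _ _ _ _ _ htne]
    apply div_neg_of_neg_of_pos _ (by positivity)
    exact hNt'
end

section
/- For the cascade motif with a shared phosphatase (Motif (k)), let σ̄ = min(S̄, P̄) and σ_μ = min(1+μ₁, μ₂/2). If μ₁F̄ − Ē > 0 and σ_μ(F̄ − Ē/μ₁) > σ̄, then ∂P₀/∂Y₂ > 0 and ∂P₁/∂Y₂ > 0 for all Y₂ in the admissible region, where P₀ = μ₂δ₁(F̄ − f(Y₂) − Y₂)Y₂/(η₂ f(Y₂)) and P₁ = Y₂/(δ₂(F̄ − f(Y₂) − Y₂)), and f(Y₂) = Y₁ is the implicit decreasing solution of S̄ = Φ(Y₁,Y₂). Consequently the steady-state function φ(Y₂) = P₀ + P₁ + (1+μ₂)Y₂ is strictly increasing and multistationarity cannot occur. -/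
open Set

/-!
Differentiating the steady-state equation `Φ(f Y₂, Y₂) = S̄` gives `f' = -∂₂Φ / ∂₁Φ < 0`. Then
`P₀' > 0` as soon as `2 Y₂ < F̄ - Y₁`, and `P₁' > 0` as soon as `F̄ - Y₁ + Y₂ f' > 0`, i.e.
`Y₂ ∂₂Φ < (F̄ - Y₁) ∂₁Φ`; thanks to `(F̄ - Y₂)(F̄ - Y₁) - Y₁ Y₂ = F̄ (F̄ - Y₁ - Y₂)` the latter
reduces to `μ₂ Y₂ < (1 + μ₁)(F̄ - Y₁)`. Both inequalities follow from
`μ₂ Y₂ < min(S̄, P̄) < σ_μ (F̄ - Ē/μ₁) < σ_μ (F̄ - Y₁)`, since `μ₁ Y₁ < Ē`.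
-/

theorem HasDerivWithinAt.const_sub_sub_id {f : ℝ → ℝ} {s : Set ℝ} {x D : ℝ} (F : ℝ)
    (hf : HasDerivWithinAt f D s x) : HasDerivWithinAt (fun y => F - f y - y) (-D - 1) s x :=
  (hf.const_sub F).sub (hasDerivAt_id' x).hasDerivWithinAt

theorem HasDerivWithinAt.eq_zero_of_forall_eq_const {g : ℝ → ℝ} {s : Set ℝ} {x g' c : ℝ}
    (hg : HasDerivWithinAt g g' s x) (hs : UniqueDiffWithinAt ℝ s x) (hx : x ∈ s)
    (hc : ∀ y ∈ s, g y = c) : g' = 0 :=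
  hs.eq_deriv s hg ((hasDerivWithinAt_const x s c).congr_of_mem hc hx)

theorem strictMonoOn_of_forall_exists_hasDerivWithinAt_pos {s : Set ℝ} (hs : Convex ℝ s)
    {g : ℝ → ℝ} (hg : ∀ x ∈ s, ∃ v, 0 < v ∧ HasDerivWithinAt g v s x) : StrictMonoOn g s := by
  choose! g' hg'pos hg' using hg
  exact strictMonoOn_of_hasDerivWithinAt_pos hs
    (fun x hx => (hg' x hx).continuousWithinAt)
    (fun x hx => (hg' x (interior_subset hx)).mono interior_subset)
    (fun x hx => hg'pos x (interior_subset hx))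

namespace MotifK

section SteadyState

variable {η₁ δ₁ μ₁ μ₂ E F : ℝ}

variable (η₁ δ₁ μ₁ μ₂ E F) in
/-- `Φ(Y₁, Y₂)` of motif (k), with `E = Ē` and `F = F̄`. -/
noncomputable def Φ (Y₁ Y₂ : ℝ) : ℝ :=
  μ₁ * Y₁ / (η₁ * (E - μ₁ * Y₁)) + Y₁ / (δ₁ * (F - Y₁ - Y₂)) + (1 + μ₁) * Y₁ + μ₂ * Y₂

variable (η₁ δ₁ μ₁ E F) in
noncomputable def partialΦ₁ (Y₁ Y₂ : ℝ) : ℝ :=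
  μ₁ * E / (η₁ * (E - μ₁ * Y₁) ^ 2) + (F - Y₂) / (δ₁ * (F - Y₁ - Y₂) ^ 2) + (1 + μ₁)

variable (δ₁ μ₂ F) in
noncomputable def partialΦ₂ (Y₁ Y₂ : ℝ) : ℝ :=
  Y₁ / (δ₁ * (F - Y₁ - Y₂) ^ 2) + μ₂

theorem hasDerivWithinAt_Φ_comp {f : ℝ → ℝ} {s : Set ℝ} {x D : ℝ}
    (hf : HasDerivWithinAt f D s x) (hη₁ : η₁ ≠ 0) (hδ₁ : δ₁ ≠ 0)
    (hE : E - μ₁ * f x ≠ 0) (hF : F - f x - x ≠ 0) :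
    HasDerivWithinAt (fun y => Φ η₁ δ₁ μ₁ μ₂ E F (f y) y)
      (partialΦ₁ η₁ δ₁ μ₁ E F (f x) x * D + partialΦ₂ δ₁ μ₂ F (f x) x) s x := by
  have hgap := hf.const_sub_sub_id F
  have h₁ := (hf.const_mul μ₁).div (((hf.const_mul μ₁).const_sub E).const_mul η₁)
    (mul_ne_zero hη₁ hE)
  have h₂ := hf.div (hgap.const_mul δ₁) (mul_ne_zero hδ₁ hF)
  have h₃ : HasDerivWithinAt (fun y => μ₂ * y) (μ₂ * 1) s x :=
    (hasDerivAt_id' x).hasDerivWithinAt.const_mul μ₂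
  refine (((h₁.add h₂).add (hf.const_mul (1 + μ₁))).add h₃).congr_deriv ?_
  simp only [partialΦ₁, partialΦ₂]
  field_simp
  ring

theorem partialΦ₁_pos {Y₁ Y₂ : ℝ} (hη₁ : 0 < η₁) (hδ₁ : 0 < δ₁) (hμ₁ : 0 < μ₁)
    (hY₁ : 0 < Y₁) (hE : μ₁ * Y₁ < E) (hF : Y₁ + Y₂ < F) :
    0 < partialΦ₁ η₁ δ₁ μ₁ E F Y₁ Y₂ := by
  have hE₀ : 0 < μ₁ * E := mul_pos hμ₁ (by nlinarith)
  have hF₀ : 0 < F - Y₂ := by linarith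
  unfold partialΦ₁
  positivity

theorem partialΦ₂_pos {Y₁ Y₂ : ℝ} (hδ₁ : 0 < δ₁) (hμ₂ : 0 < μ₂) (hY₁ : 0 < Y₁) :
    0 < partialΦ₂ δ₁ μ₂ F Y₁ Y₂ := by
  unfold partialΦ₂
  positivity

theorem mul_partialΦ₂_lt_partialΦ₁_mul {Y₁ Y₂ : ℝ} (hη₁ : 0 < η₁) (hδ₁ : 0 < δ₁)
    (hμ₁ : 0 < μ₁) (hY₁ : 0 < Y₁) (hY₂ : 0 ≤ Y₂) (hE : μ₁ * Y₁ < E) (hF : Y₁ + Y₂ < F)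
    (hμ₂ : μ₂ * Y₂ < (1 + μ₁) * (F - Y₁)) :
    Y₂ * partialΦ₂ δ₁ μ₂ F Y₁ Y₂ < partialΦ₁ η₁ δ₁ μ₁ E F Y₁ Y₂ * (F - Y₁) := by
  have hgap : 0 < F - Y₁ - Y₂ := by linarith
  have key : partialΦ₁ η₁ δ₁ μ₁ E F Y₁ Y₂ * (F - Y₁) - Y₂ * partialΦ₂ δ₁ μ₂ F Y₁ Y₂ =
      μ₁ * E * (F - Y₁) / (η₁ * (E - μ₁ * Y₁) ^ 2) + F / (δ₁ * (F - Y₁ - Y₂)) +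
        ((1 + μ₁) * (F - Y₁) - μ₂ * Y₂) := by
    unfold partialΦ₁ partialΦ₂
    field_simp
    ring
  have h₁ : 0 < μ₁ * E * (F - Y₁) := mul_pos (mul_pos hμ₁ (by nlinarith)) (by linarith)
  have h₂ : 0 < F := by linarith
  have h₃ : 0 < (1 + μ₁) * (F - Y₁) - μ₂ * Y₂ := by linarith
  have : 0 < partialΦ₁ η₁ δ₁ μ₁ E F Y₁ Y₂ * (F - Y₁) - Y₂ * partialΦ₂ δ₁ μ₂ F Y₁ Y₂ := by
    rw [key]; positivity
  linarith

theorem deriv_neg_and_pos_of_steadyState {f : ℝ → ℝ} {s : Set ℝ} {x D S : ℝ}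
    (hsol : ∀ y ∈ s, Φ η₁ δ₁ μ₁ μ₂ E F (f y) y = S) (hx : x ∈ s)
    (hs : UniqueDiffWithinAt ℝ s x) (hf : HasDerivWithinAt f D s x)
    (hη₁ : 0 < η₁) (hδ₁ : 0 < δ₁) (hμ₁ : 0 < μ₁) (hμ₂ : 0 < μ₂)
    (hfx : 0 < f x) (hx₀ : 0 ≤ x) (hE : μ₁ * f x < E) (hF : f x + x < F)
    (hμ₂x : μ₂ * x < (1 + μ₁) * (F - f x)) :
    D < 0 ∧ 0 < F - f x + x * D := by
  have hA := partialΦ₁_pos (Y₂ := x) hη₁ hδ₁ hμ₁ hfx hE hF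
  have hB := partialΦ₂_pos (F := F) (Y₂ := x) hδ₁ hμ₂ hfx
  have hAB := mul_partialΦ₂_lt_partialΦ₁_mul hη₁ hδ₁ hμ₁ hfx hx₀ hE hF hμ₂x
  have himplicit := (hasDerivWithinAt_Φ_comp (μ₂ := μ₂) hf hη₁.ne' hδ₁.ne'
    (by linarith) (by linarith)).eq_zero_of_forall_eq_const hs hx hsol
  constructor <;> nlinarith

theorem mul_lt_min_mul_of_cond {S P Y₁ Y₂ : ℝ} (hμ₁ : 0 < μ₁) (hμ₂ : 0 < μ₂)
    (hE : μ₁ * Y₁ < E) (hY₂ : μ₂ * Y₂ < min S P)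
    (hcond : min S P < min (1 + μ₁) (μ₂ / 2) * (F - E / μ₁)) :
    μ₂ * Y₂ < min (1 + μ₁) (μ₂ / 2) * (F - Y₁) := by
  have hσ : 0 < min (1 + μ₁) (μ₂ / 2) := lt_min (by linarith) (by linarith)
  have hY₁ : Y₁ < E / μ₁ := (lt_div_iff₀ hμ₁).2 (by linarith)
  calc μ₂ * Y₂ < min (1 + μ₁) (μ₂ / 2) * (F - E / μ₁) := hY₂.trans hcond
    _ ≤ min (1 + μ₁) (μ₂ / 2) * (F - Y₁) := by gcongr

theorem two_mul_lt_and_mul_lt_of_cond {S P Y₁ Y₂ : ℝ} (hμ₁ : 0 < μ₁) (hμ₂ : 0 < μ₂)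
    (hF : Y₁ + Y₂ < F) (hY₂ : 0 ≤ Y₂) (hE : μ₁ * Y₁ < E) (hY₂SP : μ₂ * Y₂ < min S P)
    (hcond : min S P < min (1 + μ₁) (μ₂ / 2) * (F - E / μ₁)) :
    2 * Y₂ < F - Y₁ ∧ μ₂ * Y₂ < (1 + μ₁) * (F - Y₁) := by
  have h := mul_lt_min_mul_of_cond hμ₁ hμ₂ hE hY₂SP hcond
  have hF₀ : 0 ≤ F - Y₁ := by linarith
  have h₁ := mul_le_mul_of_nonneg_right (min_le_left (1 + μ₁) (μ₂ / 2)) hF₀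
  have h₂ := mul_le_mul_of_nonneg_right (min_le_right (1 + μ₁) (μ₂ / 2)) hF₀
  constructor <;> nlinarith

end SteadyState

section Output

variable {μ₂ δ₁ η₂ δ₂ F : ℝ} {f : ℝ → ℝ} {s : Set ℝ} {x D : ℝ}

variable (μ₂ δ₁ η₂ F f) in
noncomputable def P₀ (Y₂ : ℝ) : ℝ :=
  μ₂ * δ₁ * (F - f Y₂ - Y₂) * Y₂ / (η₂ * f Y₂)

variable (δ₂ F f) in
noncomputable def P₁ (Y₂ : ℝ) : ℝ :=
  Y₂ / (δ₂ * (F - f Y₂ - Y₂))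

theorem exists_pos_hasDerivWithinAt_P₀ (hf : HasDerivWithinAt f D s x) (hμ₂ : 0 < μ₂)
    (hδ₁ : 0 < δ₁) (hη₂ : 0 < η₂) (hD : D ≤ 0) (hfx : 0 < f x) (hx : 0 ≤ x)
    (h2x : 2 * x < F - f x) :
    ∃ v, 0 < v ∧ HasDerivWithinAt (P₀ μ₂ δ₁ η₂ F f) v s x := by
  have hgap := hf.const_sub_sub_id F
  have hnum : HasDerivWithinAt (fun y => μ₂ * δ₁ * (F - f y - y) * y)
      (μ₂ * δ₁ * (-D - 1) * x + μ₂ * δ₁ * (F - f x - x) * 1) s x :=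
    (hgap.const_mul (μ₂ * δ₁)).mul (hasDerivAt_id' x).hasDerivWithinAt
  unfold P₀
  refine ⟨μ₂ * δ₁ * (f x * (F - f x - 2 * x) + (-D) * x * (F - x)) / (η₂ * f x ^ 2), ?_,
    (hnum.div (hf.const_mul η₂) (by positivity)).congr_deriv ?_⟩
  · have h₁ : 0 < F - f x - 2 * x := by linarith
    have h₂ : 0 ≤ -D := by linarith
    have h₃ : 0 ≤ F - x := by linarith
    positivity
  · field_simp
    ring

theorem exists_pos_hasDerivWithinAt_P₁ (hf : HasDerivWithinAt f D s x) (hδ₂ : 0 < δ₂)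
    (hF : f x + x < F) (hslope : 0 < F - f x + x * D) :
    ∃ v, 0 < v ∧ HasDerivWithinAt (P₁ δ₂ F f) v s x := by
  have hgap := hf.const_sub_sub_id F
  have hgap₀ : 0 < F - f x - x := by linarith
  unfold P₁
  refine ⟨(F - f x + x * D) / (δ₂ * (F - f x - x) ^ 2), by positivity, ?_⟩
  have hquot := (hasDerivAt_id' x).hasDerivWithinAt.div (hgap.const_mul δ₂) (mul_pos hδ₂ hgap₀).ne'
  exact hquot.congr_deriv (by field_simp; ring)

end Output

end MotifK

theorem motif_k_no_multistationarity_general (η₁ η₂ δ₁ δ₂ μ₁ μ₂ Ebar Fbar Sbar Pbar : ℝ)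
    (hη₁ : 0 < η₁) (hη₂ : 0 < η₂) (hδ₁ : 0 < δ₁) (hδ₂ : 0 < δ₂)
    (hμ₁ : 0 < μ₁) (hμ₂ : 0 < μ₂)
    (Γ : Set ℝ) (hΓ : Γ = Ico 0 (min Fbar (Sbar / μ₂)))
    (f : ℝ → ℝ) (hfC : ContDiffOn ℝ 1 f Γ)
    (hsol : ∀ Y₂ ∈ Γ,
      μ₁ * f Y₂ / (η₁ * (Ebar - μ₁ * f Y₂)) +
        f Y₂ / (δ₁ * (Fbar - f Y₂ - Y₂)) + (1 + μ₁) * f Y₂ + μ₂ * Y₂ = Sbar)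
    (hcons : ∀ Y₂ ∈ Γ, 0 < f Y₂ ∧ f Y₂ + Y₂ < Fbar ∧ μ₁ * f Y₂ < Ebar ∧
      (1 + μ₁) * f Y₂ + μ₂ * Y₂ < Sbar ∧ μ₂ * Y₂ < Pbar)
    (hcond : min Sbar Pbar < min (1 + μ₁) (μ₂ / 2) * (Fbar - Ebar / μ₁)) :
    let P₀ : ℝ → ℝ := fun Y₂ =>
      μ₂ * δ₁ * (Fbar - f Y₂ - Y₂) * Y₂ / (η₂ * f Y₂)
    let P₁ : ℝ → ℝ := fun Y₂ => Y₂ / (δ₂ * (Fbar - f Y₂ - Y₂))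
    let φ : ℝ → ℝ := fun Y₂ => P₀ Y₂ + P₁ Y₂ + (1 + μ₂) * Y₂
    (∀ Y₂ ∈ Γ, 0 < derivWithin P₀ Γ Y₂ ∧ 0 < derivWithin P₁ Γ Y₂) ∧
      StrictMonoOn φ Γ := by
  intro P₀ P₁ φ
  have hΓd : UniqueDiffOn ℝ Γ := hΓ ▸ uniqueDiffOn_Ico _ _
  have hP : ∀ x ∈ Γ, (∃ v, 0 < v ∧ HasDerivWithinAt P₀ v Γ x) ∧
      ∃ v, 0 < v ∧ HasDerivWithinAt P₁ v Γ x := by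
    intro x hx
    obtain ⟨hfx, hF, hE, hS, hPbar⟩ := hcons x hx
    have hx₀ : 0 ≤ x := (hΓ ▸ hx).1
    have hf := ((hfC.differentiableOn one_ne_zero) x hx).hasDerivWithinAt
    have hSP : μ₂ * x < min Sbar Pbar := lt_min (by nlinarith) hPbar
    obtain ⟨h2x, hμ₂x⟩ := MotifK.two_mul_lt_and_mul_lt_of_cond hμ₁ hμ₂ hF hx₀ hE hSP hcond
    obtain ⟨hD, hslope⟩ := MotifK.deriv_neg_and_pos_of_steadyState hsol hx (hΓd x hx) hf
      hη₁ hδ₁ hμ₁ hμ₂ hfx hx₀ hE hF hμ₂x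
    exact ⟨MotifK.exists_pos_hasDerivWithinAt_P₀ hf hμ₂ hδ₁ hη₂ hD.le hfx hx₀ h2x,
      MotifK.exists_pos_hasDerivWithinAt_P₁ hf hδ₂ hF hslope⟩
  refine ⟨fun x hx => ?_, ?_⟩
  · obtain ⟨⟨v₀, hv₀, hP₀⟩, ⟨v₁, hv₁, hP₁⟩⟩ := hP x hx
    rw [hP₀.derivWithin (hΓd x hx), hP₁.derivWithin (hΓd x hx)]
    exact ⟨hv₀, hv₁⟩
  · refine strictMonoOn_of_forall_exists_hasDerivWithinAt_pos (hΓ ▸ convex_Ico _ _)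
      fun x hx => ?_
    obtain ⟨⟨v₀, hv₀, hP₀⟩, ⟨v₁, hv₁, hP₁⟩⟩ := hP x hx
    exact ⟨_, by positivity,
      (hP₀.add hP₁).add ((hasDerivAt_id' x).hasDerivWithinAt.const_mul (1 + μ₂))⟩

/-- Motif (k) (cascade with shared phosphatase): if `μ₁F̄ − Ē > 0` and
`σ_μ (F̄ − Ē/μ₁) > σ̄` where `σ̄ = min(S̄, P̄)` and `σ_μ = min(1+μ₁, μ₂/2)`,
then `P₀` and `P₁` are strictly increasing in `Y₂` on the admissible region,
hence the steady-state function `φ` is strictly increasing and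
multistationarity cannot occur. -/
theorem motif_k_no_multistationarity (η₁ η₂ δ₁ δ₂ μ₁ μ₂ Ebar Fbar Sbar Pbar : ℝ)
    (hη₁ : 0 < η₁) (hη₂ : 0 < η₂) (hδ₁ : 0 < δ₁) (hδ₂ : 0 < δ₂)
    (hμ₁ : 0 < μ₁) (hμ₂ : 0 < μ₂) (hE : 0 < Ebar) (hF : 0 < Fbar)
    (hS : 0 < Sbar) (hP : 0 < Pbar)
    (Γ : Set ℝ) (hΓ : Γ = Ico 0 (min Fbar (Sbar / μ₂)))
    (f : ℝ → ℝ) (hfC : ContDiffOn ℝ 1 f Γ) (hfanti : StrictAntiOn f Γ)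
    (hsol : ∀ Y₂ ∈ Γ,
      μ₁ * f Y₂ / (η₁ * (Ebar - μ₁ * f Y₂)) +
        f Y₂ / (δ₁ * (Fbar - f Y₂ - Y₂)) + (1 + μ₁) * f Y₂ + μ₂ * Y₂ = Sbar)
    (hcons : ∀ Y₂ ∈ Γ, 0 < f Y₂ ∧ f Y₂ + Y₂ < Fbar ∧ μ₁ * f Y₂ < Ebar ∧
      (1 + μ₁) * f Y₂ + μ₂ * Y₂ < Sbar ∧ μ₂ * Y₂ < Pbar)
    (hΔ : 0 < μ₁ * Fbar - Ebar)
    (hcond : min Sbar Pbar < min (1 + μ₁) (μ₂ / 2) * (Fbar - Ebar / μ₁)) :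
    let P₀ : ℝ → ℝ := fun Y₂ =>
      μ₂ * δ₁ * (Fbar - f Y₂ - Y₂) * Y₂ / (η₂ * f Y₂)
    let P₁ : ℝ → ℝ := fun Y₂ => Y₂ / (δ₂ * (Fbar - f Y₂ - Y₂))
    let φ : ℝ → ℝ := fun Y₂ => P₀ Y₂ + P₁ Y₂ + (1 + μ₂) * Y₂
    (∀ Y₂ ∈ Γ, 0 < derivWithin P₀ Γ Y₂ ∧ 0 < derivWithin P₁ Γ Y₂) ∧
      StrictMonoOn φ Γ :=
  motif_k_no_multistationarity_general η₁ η₂ δ₁ δ₂ μ₁ μ₂ Ebar Fbar Sbar Pbar hη₁ hη₂ hδ₁ hδ₂ hμ₁ hμ₂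
    Γ hΓ f hfC hsol hcons hcond
end

section
/- For Motif (k) with Δ₁ = μ₁F̄ − Ē > 0, consider the limit curve φ_∞(Y₂) = (1+μ₂)Y₂ + μ₂δ₁(Δ̄₁ − Y₂)Y₂/(η₂Ē/μ₁) + Y₂/(δ₂(Δ̄₁ − Y₂)) on [0, Δ̄₁), where Δ̄₁ = Δ₁/μ₁. Let β = μ₁μ₂δ₁/(η₂Ē) and Δ₂ = 27μ₁μ₂²δ₁²η₂Ē(μ₁F̄ − Ē) − δ₂(δ₁μ₂μ₁F̄ − (μ₂δ₁ + η₂(1+μ₂))Ē)³. If Δ₂ < 0, then there exists Y₂ ∈ (0, Δ̄₁) with φ_∞'(Y₂) < 0. -/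
open Set

/-!
After the substitution `β = μ₁μ₂δ₁/(η₂Ē)` the limit curve is
`φ_∞(Y) = (1+μ₂)Y + β(Δ̄₁ − Y)Y + Y/(δ₂(Δ̄₁ − Y))`. Writing `Y = Δ̄₁ − x`, its slope is
`2βx − A + Δ̄₁/(δ₂x²)` with `A = βΔ̄₁ − (1+μ₂)`. At `x = A/(3β)` this equals
`(27β²Δ̄₁ − δ₂A³)/(3δ₂A²)`, and `Δ₂ < 0` is exactly `27β²Δ̄₁ < δ₂A³` multiplied by `(η₂Ē)³`;
then `A > 0`, and `A < βΔ̄₁` puts `x` inside `(0, Δ̄₁)`.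
-/

/-- The limit curve `φ_∞` with the coefficients `a = 1 + μ₂`, `b = β`, `c = δ₂`, `D = Δ̄₁`. -/
noncomputable def limitCurve (a b c D Y : ℝ) : ℝ :=
  a * Y + b * (D - Y) * Y + Y / (c * (D - Y))

section LimitCurve

variable {a b c D : ℝ}

theorem hasDerivAt_limitCurve {Y : ℝ} (hc : c ≠ 0) (hY : Y ≠ D) :
    HasDerivAt (limitCurve a b c D) (a + b * (D - 2 * Y) + D / (c * (D - Y) ^ 2)) Y := by
  have hDY : c * (D - Y) ≠ 0 := mul_ne_zero hc (sub_ne_zero.mpr hY.symm)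
  have hgap : HasDerivAt (fun Y : ℝ => D - Y) (-1) Y := by
    simpa using (hasDerivAt_id Y).const_sub D
  have hsum := (((hasDerivAt_id Y).const_mul a).add ((hgap.const_mul b).mul (hasDerivAt_id Y))).add
    ((hasDerivAt_id Y).div (hgap.const_mul c) hDY)
  refine hsum.congr_deriv ?_
  simp only [id]
  field_simp
  ring

theorem exists_deriv_limitCurve_neg (ha : 0 ≤ a) (hb : 0 < b) (hc : 0 < c) (hD : 0 < D)
    (h : 27 * b ^ 2 * D < c * (b * D - a) ^ 3) :
    ∃ Y ∈ Ioo 0 D, deriv (limitCurve a b c D) Y < 0 := by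
  obtain ⟨A, rfl⟩ : ∃ A, a = b * D - A := ⟨b * D - a, by ring⟩
  rw [sub_sub_cancel] at h
  have hA : 0 < A := by
    have : 0 < c * A ^ 3 := lt_of_le_of_lt (by positivity) h
    exact (Odd.pow_pos_iff (by decide)).mp (pos_of_mul_pos_right this hc.le)
  set x := A / (3 * b) with hx_def
  have hx : 0 < x := by positivity
  have hxD : x < D := by
    rw [hx_def, div_lt_iff₀ (by positivity)]
    nlinarith
  refine ⟨D - x, ⟨by linarith, by linarith⟩, ?_⟩
  rw [(hasDerivAt_limitCurve hc.ne' (by linarith)).deriv]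
  have hslope : b * D - A + b * (D - 2 * (D - x)) + D / (c * (D - (D - x)) ^ 2) =
      (27 * b ^ 2 * D - c * A ^ 3) / (3 * c * A ^ 2) := by
    rw [hx_def]
    field_simp [hA.ne']
    ring
  rw [hslope]
  exact div_neg_of_neg_of_pos (by linarith) (by positivity)

end LimitCurve

theorem motif_k_slope_condition_of_Δ₂_neg {η₂ δ₁ δ₂ μ₁ μ₂ Ebar Fbar : ℝ}
    (hη₂ : 0 < η₂) (hμ₁ : 0 < μ₁) (hE : 0 < Ebar)
    (hΔ₂ : 27 * μ₁ * μ₂ ^ 2 * δ₁ ^ 2 * η₂ * Ebar * (μ₁ * Fbar - Ebar) -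
      δ₂ * (δ₁ * μ₂ * μ₁ * Fbar - (μ₂ * δ₁ + η₂ * (1 + μ₂)) * Ebar) ^ 3 < 0) :
    let β := μ₁ * μ₂ * δ₁ / (η₂ * Ebar)
    let D := (μ₁ * Fbar - Ebar) / μ₁
    27 * β ^ 2 * D < δ₂ * (β * D - (1 + μ₂)) ^ 3 := by
  intro β D
  have hηE : 0 < η₂ * Ebar := by positivity
  have hid : δ₂ * (β * D - (1 + μ₂)) ^ 3 - 27 * β ^ 2 * D =
      -(27 * μ₁ * μ₂ ^ 2 * δ₁ ^ 2 * η₂ * Ebar * (μ₁ * Fbar - Ebar) -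
        δ₂ * (δ₁ * μ₂ * μ₁ * Fbar - (μ₂ * δ₁ + η₂ * (1 + μ₂)) * Ebar) ^ 3) /
        (η₂ * Ebar) ^ 3 := by
    simp only [β, D]
    field_simp
    ring
  have : 0 < δ₂ * (β * D - (1 + μ₂)) ^ 3 - 27 * β ^ 2 * D := by
    rw [hid]
    exact div_pos (neg_pos.mpr hΔ₂) (by positivity)
  linarith

theorem motif_k_limit_curve_decreasing_general (η₂ δ₁ δ₂ μ₁ μ₂ Ebar Fbar : ℝ)
    (hη₂ : 0 < η₂) (hδ₁ : 0 < δ₁) (hδ₂ : 0 < δ₂)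
    (hμ₁ : 0 < μ₁) (hμ₂ : 0 < μ₂) (hE : 0 < Ebar)
    (hΔ₁ : 0 < μ₁ * Fbar - Ebar)
    (hΔ₂ : 27 * μ₁ * μ₂ ^ 2 * δ₁ ^ 2 * η₂ * Ebar * (μ₁ * Fbar - Ebar) -
      δ₂ * (δ₁ * μ₂ * μ₁ * Fbar -
        (μ₂ * δ₁ + η₂ * (1 + μ₂)) * Ebar) ^ 3 < 0) :
    let Δbar₁ : ℝ := (μ₁ * Fbar - Ebar) / μ₁
    let φinf : ℝ → ℝ := fun Y₂ =>
      (1 + μ₂) * Y₂ + μ₂ * δ₁ * (Δbar₁ - Y₂) * Y₂ / (η₂ * Ebar / μ₁) +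
        Y₂ / (δ₂ * (Δbar₁ - Y₂))
    ∃ Y₂ ∈ Ioo 0 Δbar₁, deriv φinf Y₂ < 0 := by
  intro Δbar₁ φinf
  set β := μ₁ * μ₂ * δ₁ / (η₂ * Ebar)
  have hφ : φinf = limitCurve (1 + μ₂) β δ₂ Δbar₁ := by
    funext Y
    simp only [φinf, limitCurve, β]
    field_simp
  rw [hφ]
  exact exists_deriv_limitCurve_neg (by positivity) (by positivity) hδ₂ (by positivity)
    (motif_k_slope_condition_of_Δ₂_neg hη₂ hμ₁ hE hΔ₂)

/-- Motif (k) with `Δ₁ = μ₁F̄ − Ē > 0`: for the limit curve `φ_∞` of the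
steady-state function as `S̄ → ∞`, if `Δ₂ < 0` then `φ_∞` is decreasing
somewhere on `(0, Δ̄₁)`, where `Δ̄₁ = Δ₁/μ₁`. -/
theorem motif_k_limit_curve_decreasing (η₂ δ₁ δ₂ μ₁ μ₂ Ebar Fbar : ℝ)
    (hη₂ : 0 < η₂) (hδ₁ : 0 < δ₁) (hδ₂ : 0 < δ₂)
    (hμ₁ : 0 < μ₁) (hμ₂ : 0 < μ₂) (hE : 0 < Ebar) (hF : 0 < Fbar)
    (hΔ₁ : 0 < μ₁ * Fbar - Ebar)
    (hΔ₂ : 27 * μ₁ * μ₂ ^ 2 * δ₁ ^ 2 * η₂ * Ebar * (μ₁ * Fbar - Ebar) -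
      δ₂ * (δ₁ * μ₂ * μ₁ * Fbar -
        (μ₂ * δ₁ + η₂ * (1 + μ₂)) * Ebar) ^ 3 < 0) :
    let Δbar₁ : ℝ := (μ₁ * Fbar - Ebar) / μ₁
    let φinf : ℝ → ℝ := fun Y₂ =>
      (1 + μ₂) * Y₂ + μ₂ * δ₁ * (Δbar₁ - Y₂) * Y₂ / (η₂ * Ebar / μ₁) +
        Y₂ / (δ₂ * (Δbar₁ - Y₂))
    ∃ Y₂ ∈ Ioo 0 Δbar₁, deriv φinf Y₂ < 0 :=
  motif_k_limit_curve_decreasing_general η₂ δ₁ δ₂ μ₁ μ₂ Ebar Fbar hη₂ hδ₁ hδ₂ hμ₁ hμ₂ hE hΔ₁ hΔ₂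
end
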